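/- arXiv:1103.4644 — 11 statements merged into one kernel-verified Lean document; each statement's English description precedes it below -/
import Mathlib

section
/- Let p be a prime, G a finite p-group, and let T and U be finite nonempty transitive G-sets such that U has more than one element and there exists at least one G-map from T to U. Then the number φ_T(U) of G-maps from T to U is divisible by p. -/
/-- Let p be a prime, G a finite p-group, and T, U finite nonempty transitive G-sets with
#U > 1 such that there exists at least one G-map T → U. Then the number of G-maps from
T to U is divisible by p. -/
theorem prime_dvd_card_equivariant_maps
    {p : ℕ} (hp : p.Prime) {G T U : Type*} [Group G] [Finite G] (hG : IsPGroup p G)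
    [MulAction G T] [MulAction G U]
    [Fintype T] [Fintype U] [Nonempty T] [Nonempty U]
    [MulAction.IsPretransitive G T] [MulAction.IsPretransitive G U]
    (hU : 1 < Fintype.card U)
    (hex : ∃ f : T → U, ∀ (g : G) (t : T), f (g • t) = g • f t) :
    p ∣ Nat.card {f : T → U // ∀ (g : G) (t : T), f (g • t) = g • f t} := by
  classical
  obtain ⟨t0⟩ := (inferInstance : Nonempty T)
  set H := MulAction.stabilizer G t0 with hHdef
  have hH : IsPGroup p H := hG.to_subgroup H
  haveI : Fintype G := Fintype.ofFinite G
  haveI : Fact p.Prime := ⟨hp⟩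
  -- p ∣ card U
  have hdvdU : p ∣ Fintype.card U := by
    obtain ⟨u0⟩ := (inferInstance : Nonempty U)
    have horb : MulAction.orbit G u0 = Set.univ := MulAction.orbit_eq_univ G u0
    have hdvd : Fintype.card U ∣ Fintype.card G := by
      refine Dvd.intro (Fintype.card (MulAction.stabilizer G u0)) ?_
      rw [← MulAction.card_orbit_mul_card_stabilizer_eq_card_group G u0]
      congr 1
      exact (Fintype.card_congr ((Equiv.setCongr horb).trans (Equiv.Set.univ U))).symm
    obtain ⟨n, hn⟩ := IsPGroup.iff_card.mp hG
    rw [Nat.card_eq_fintype_card] at hn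
    rw [hn] at hdvd
    obtain ⟨k, hk, hUk⟩ := (Nat.dvd_prime_pow hp).mp hdvd
    rcases Nat.eq_zero_or_pos k with rfl | hkpos
    · simp [hUk] at hU
    · exact hUk ▸ dvd_pow_self p hkpos.ne'
  -- p ∣ card of fixed points of H on U
  have hfix : p ∣ Nat.card (MulAction.fixedPoints H U) := by
    have := hH.card_modEq_card_fixedPoints U
    have hcard : p ∣ Nat.card U := by rwa [Nat.card_eq_fintype_card]
    exact (Nat.modEq_zero_iff_dvd.mpr hcard).symm.trans this |>.symm
      |> Nat.modEq_zero_iff_dvd.mp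
  -- bijection between equivariant maps and fixed points
  have key : ∀ (u : U), u ∈ MulAction.fixedPoints H U →
      ∀ (t : T) (g : G), g • t0 = t →
        (MulAction.exists_smul_eq G t0 t).choose • u = g • u := by
    intro u hu t g hg
    set g' := (MulAction.exists_smul_eq G t0 t).choose with hg'def
    have hg' : g' • t0 = t := (MulAction.exists_smul_eq G t0 t).choose_spec
    have hmem : g'⁻¹ * g ∈ H := by
      simp only [hHdef, MulAction.mem_stabilizer_iff, mul_smul, hg, inv_smul_eq_iff, hg']
    have := hu ⟨g'⁻¹ * g, hmem⟩
    have h2 : (g'⁻¹ * g) • u = u := this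
    rw [mul_smul] at h2
    conv_lhs => rw [← h2]
    rw [smul_inv_smul]
  let Φ : MulAction.fixedPoints H U → {f : T → U // ∀ (g : G) (t : T), f (g • t) = g • f t} :=
    fun u => ⟨fun t => (MulAction.exists_smul_eq G t0 t).choose • u.1, by
      intro g t
      obtain ⟨g0, hg0⟩ := MulAction.exists_smul_eq G t0 t
      show (MulAction.exists_smul_eq G t0 (g • t)).choose • u.1
          = g • ((MulAction.exists_smul_eq G t0 t).choose • u.1)
      rw [key u.1 u.2 t g0 hg0, key u.1 u.2 (g • t) (g * g0) (by rw [mul_smul, hg0]),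
        mul_smul]⟩
  have hΦbij : Function.Bijective Φ := by
    constructor
    · intro u v huv
      have h1 : (Φ u).1 t0 = (Φ v).1 t0 := by rw [huv]
      have hu0 : (Φ u).1 t0 = u.1 := by
        show (MulAction.exists_smul_eq G t0 t0).choose • u.1 = u.1
        rw [key u.1 u.2 t0 1 (one_smul G t0), one_smul]
      have hv0 : (Φ v).1 t0 = v.1 := by
        show (MulAction.exists_smul_eq G t0 t0).choose • v.1 = v.1
        rw [key v.1 v.2 t0 1 (one_smul G t0), one_smul]
      exact Subtype.ext (by rw [← hu0, ← hv0, h1])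
    · rintro ⟨f, hf⟩
      have hmemfix : f t0 ∈ MulAction.fixedPoints H U := by
        intro h
        have : (h : G) • f t0 = f ((h : G) • t0) := (hf (h : G) t0).symm
        show (h : G) • f t0 = f t0
        rw [this, h.2]
      refine ⟨⟨f t0, hmemfix⟩, Subtype.ext (funext fun t => ?_)⟩
      obtain ⟨g0, hg0⟩ := MulAction.exists_smul_eq G t0 t
      show (MulAction.exists_smul_eq G t0 t).choose • f t0 = f t
      rw [key (f t0) hmemfix t g0 hg0, ← hf, hg0]
  rwa [← Nat.card_eq_of_bijective Φ hΦbij]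
end

section
/- Let G be a group acting transitively on finite nonempty sets T and U. Then the product #Aut_G(T) · #U divides the product φ_T(U) · #T, where φ_T(U) is the number of G-maps from T to U and Aut_G(T) is the (finite) group of bijective G-maps T → T. (Equivalently, φ_T(T) divides φ_T(U)·(#T/#U).) -/
/-!
Count the pairs `(t, u) ∈ T × U` with `Stab t ≤ Stab u`. As `T` is transitive, a `G`-map
`T → U` is determined by the image of any one point `t`, and that image can be any `u` with
`Stab t ≤ Stab u`; so there are `φ_T(U) · #T` such pairs. As `U` is transitive, the fibres over
the points of `U` are translates of each other, so there are also
`#U · #{t | Stab t ≤ Stab u₀}`.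
Finally `Aut_G(T)` preserves stabilizers and acts freely on the transitive `G`-set `T`, so
`#Aut_G(T)` divides the size of that fibre.
-/

open MulAction

theorem card_group_dvd_card_of_isCancelSMul (A X : Type*) [Group A] [MulAction A X]
    [IsCancelSMul A X] : Nat.card A ∣ Nat.card X := by
  rw [Nat.card_congr (selfEquivOrbitsQuotientProd (G := A) (X := X)
    IsCancelSMul.stabilizer_eq_bot), Nat.card_prod]
  exact dvd_mul_left _ _

section

variable {G T U : Type*} [Group G] [MulAction G T] [MulAction G U]

theorem stabilizer_smul_le_stabilizer_smul_iff (g : G) (t : T) (u : U) :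
    stabilizer G (g • t) ≤ stabilizer G (g • u) ↔ stabilizer G t ≤ stabilizer G u := by
  simp only [stabilizer_smul_eq_stabilizer_map_conj]
  exact Subgroup.map_le_map_iff_of_injective (MulAut.conj g).injective

theorem stabilizer_le_stabilizer_apply {f : T → U}
    (hf : ∀ (g : G) (t : T), f (g • t) = g • f t) (t : T) :
    stabilizer G t ≤ stabilizer G (f t) := fun g hg => by
  rw [mem_stabilizer_iff] at hg ⊢
  rw [← hf, hg]

theorem smul_eq_smul_of_stabilizer_le {t : T} {u : U} (h : stabilizer G t ≤ stabilizer G u)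
    {g g' : G} (hg : g • t = g' • t) : g • u = g' • u := by
  have hmem : g'⁻¹ * g ∈ stabilizer G t := by
    rw [mem_stabilizer_iff, mul_smul, hg, inv_smul_smul]
  have := h hmem
  rwa [mem_stabilizer_iff, mul_smul, inv_smul_eq_iff] at this

variable (G T U) in
def stabilizerLePairs : Set (T × U) := {p | stabilizer G p.1 ≤ stabilizer G p.2}

variable (G T) in
def equivariantPerm : Subgroup (Equiv.Perm T) where
  carrier := {e | ∀ (g : G) (t : T), e (g • t) = g • e t}
  one_mem' _ _ := rfl
  mul_mem' he he' g t := by rw [Equiv.Perm.mul_apply, Equiv.Perm.mul_apply, he', he]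
  inv_mem' he g t := by
    rw [Equiv.Perm.inv_def, Equiv.symm_apply_eq, he, Equiv.apply_symm_apply]

theorem stabilizer_apply_of_mem_equivariantPerm {e : Equiv.Perm T} (he : e ∈ equivariantPerm G T)
    (t : T) : stabilizer G (e t) = stabilizer G t := by
  refine le_antisymm ?_ (stabilizer_le_stabilizer_apply he t)
  simpa using stabilizer_le_stabilizer_apply (inv_mem he) (e t)

instance [IsPretransitive G T] : IsCancelSMul (equivariantPerm G T) T := by
  refine isCancelSMul_iff_eq_one_of_smul_eq.2 fun e t ht => Subtype.ext <| Equiv.ext fun s => ?_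
  obtain ⟨g, rfl⟩ := exists_smul_eq G t s
  exact (e.2 g t).trans (congrArg (g • ·) ht)

theorem card_equivariantPerm_dvd_card [IsPretransitive G T] (u : U) :
    Nat.card (equivariantPerm G T) ∣ Nat.card {t : T // stabilizer G t ≤ stabilizer G u} :=
  card_group_dvd_card_of_isCancelSMul (equivariantPerm G T)
    ({ carrier := {t | stabilizer G t ≤ stabilizer G u}
       smul_mem' := fun e t ht => by
         change stabilizer G (e.1 t) ≤ _
         rwa [stabilizer_apply_of_mem_equivariantPerm e.2 t] } :
      SubMulAction (equivariantPerm G T) T)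

noncomputable def equivariantMapsEvalEquiv [IsPretransitive G T] (t : T) :
    {f : T → U // ∀ (g : G) (t : T), f (g • t) = g • f t} ≃
      {u : U // stabilizer G t ≤ stabilizer G u} where
  toFun f := ⟨f.1 t, stabilizer_le_stabilizer_apply f.2 t⟩
  invFun u := ⟨fun s => (exists_smul_eq G t s).choose • u.1, fun g s => by
    rw [smul_smul]
    refine smul_eq_smul_of_stabilizer_le u.2 ?_
    rw [(exists_smul_eq G t _).choose_spec, mul_smul, (exists_smul_eq G t _).choose_spec]⟩
  left_inv f := by
    ext s
    dsimp only
    rw [← f.2, (exists_smul_eq G t s).choose_spec]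
  right_inv u := by
    ext
    refine (smul_eq_smul_of_stabilizer_le u.2 ?_).trans (one_smul G u.1)
    rw [(exists_smul_eq G t t).choose_spec, one_smul]

theorem card_equivariantMaps_mul_card [IsPretransitive G T] :
    Nat.card {f : T → U // ∀ (g : G) (t : T), f (g • t) = g • f t} * Nat.card T =
      Nat.card (stabilizerLePairs G T U) := by
  rw [← Nat.card_prod]
  exact Nat.card_congr <| (Equiv.prodComm _ _).trans <| (Equiv.sigmaEquivProd _ _).symm.trans <|
    (Equiv.sigmaCongrRight equivariantMapsEvalEquiv).trans
      (Equiv.subtypeProdEquivSigmaSubtype fun (t : T) (u : U) =>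
        stabilizer G t ≤ stabilizer G u).symm

theorem card_stabilizerLePairs [IsPretransitive G U] [Finite T] [Fintype U] (u₀ : U) :
    Nat.card (stabilizerLePairs G T U) =
      Nat.card U * Nat.card {t : T // stabilizer G t ≤ stabilizer G u₀} := by
  have hfiber (u : U) : Nat.card {t : T // stabilizer G t ≤ stabilizer G u} =
      Nat.card {t : T // stabilizer G t ≤ stabilizer G u₀} := by
    obtain ⟨g, rfl⟩ := exists_smul_eq G u₀ u
    exact Nat.card_congr ((toPerm g).subtypeEquiv fun t =>
      (stabilizer_smul_le_stabilizer_smul_iff g t u₀).symm).symm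
  have hsigma :
      stabilizerLePairs G T U ≃ Σ u : U, {t : T // stabilizer G t ≤ stabilizer G u} :=
    ((Equiv.prodComm T U).subtypeEquiv fun _ => Iff.rfl).trans
      (Equiv.subtypeProdEquivSigmaSubtype fun u t => stabilizer G t ≤ stabilizer G u)
  rw [Nat.card_congr hsigma, Nat.card_sigma, Finset.sum_congr rfl fun u _ => hfiber u,
    Finset.sum_const, smul_eq_mul, Finset.card_univ, Nat.card_eq_fintype_card (α := U)]

end

theorem card_autGSet_mul_card_dvd_general
    {G T U : Type*} [Group G] [MulAction G T] [MulAction G U]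
    [Fintype T] [Fintype U] [Nonempty U]
    [MulAction.IsPretransitive G T] [MulAction.IsPretransitive G U] :
    Nat.card {e : T ≃ T // ∀ (g : G) (t : T), e (g • t) = g • e t} * Fintype.card U ∣
      Nat.card {f : T → U // ∀ (g : G) (t : T), f (g • t) = g • f t} * Fintype.card T := by
  obtain ⟨u₀⟩ := ‹Nonempty U›
  rw [← Nat.card_eq_fintype_card, ← Nat.card_eq_fintype_card, card_equivariantMaps_mul_card,
    card_stabilizerLePairs u₀, mul_comm]
  exact mul_dvd_mul_left _ (card_equivariantPerm_dvd_card u₀)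

/-- Let G be a group acting transitively on finite nonempty sets T and U. Then
#Aut_G(T) · #U divides φ_T(U) · #T, where φ_T(U) is the number of G-maps T → U and
Aut_G(T) is the group of bijective G-maps T → T. -/
theorem card_autGSet_mul_card_dvd
    {G T U : Type*} [Group G] [MulAction G T] [MulAction G U]
    [Fintype T] [Fintype U] [Nonempty T] [Nonempty U]
    [MulAction.IsPretransitive G T] [MulAction.IsPretransitive G U] :
    Nat.card {e : T ≃ T // ∀ (g : G) (t : T), e (g • t) = g • e t} * Fintype.card U ∣
      Nat.card {f : T → U // ∀ (g : G) (t : T), f (g • t) = g • f t} * Fintype.card T :=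
  card_autGSet_mul_card_dvd_general
end

section
/- Let p be a prime, G a nontrivial finite p-group, and let T and U be finite nonempty transitive G-sets such that there exists a G-map from T to U and #U < #T. Then for every integer s divisible by p, the product p · #Aut_G(T) divides φ_T(U) · s^{#T/#U}. (Equivalently, (φ_T(U)/φ_T(T))·s^{#T/#U} ≡ 0 mod p.) -/
/-!
`Aut_G(T)` acts on the `G`-maps `T → U` by precomposition with inverses. A `G`-map out of a
transitive `G`-set is determined by a single value, so the stabilizer of a `G`-map `f` acts
freely on every fibre of `f`, and its order divides the common fibre size `c = #T / #U`. As `G`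
is a `p`-group, `#T` and hence `c` is a power `p ^ k`, and `k + 1 ≤ p ^ k`; so
`p · #Stab(f) ∣ p ^ c`. Summing `#Aut_G(T) / #Stab(f)` over the orbits gives
`p · #Aut_G(T) ∣ φ_T(U) · p ^ c ∣ φ_T(U) · s ^ c`.
-/

theorem Equiv.symm_apply_smul_of_apply_smul {G T : Type*} [Group G] [MulAction G T] {e : T ≃ T}
    (he : ∀ (g : G) (t : T), e (g • t) = g • e t) (g : G) (t : T) :
    e.symm (g • t) = g • e.symm t :=
  e.injective <| by rw [he, Equiv.apply_symm_apply, Equiv.apply_symm_apply]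

namespace MulAction

section Counting

variable {H X : Type*} [Group H] [MulAction H X]

theorem mul_card_dvd_card_mul_of_forall_mul_card_stabilizer_dvd [Finite X] {k m : ℕ}
    (h : ∀ x : X, k * Nat.card (stabilizer H x) ∣ m) : k * Nat.card H ∣ Nat.card X * m := by
  classical
  have := Fintype.ofFinite (orbitRel.Quotient H X)
  rw [Nat.card_congr (selfEquivSigmaOrbits H X), Nat.card_sigma, Finset.sum_mul]
  refine Finset.dvd_sum fun ω _ => ?_
  rw [← Subgroup.index_mul_card (stabilizer H ω.out), index_stabilizer, Nat.card_coe_set_eq,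
    mul_left_comm]
  exact mul_dvd_mul_left _ (h _)

theorem card_dvd_card_of_stabilizer_eq_bot (h : ∀ x : X, stabilizer H x = ⊥) :
    Nat.card H ∣ Nat.card X :=
  ⟨_, by rw [Nat.card_congr (selfEquivOrbitsQuotientProd h), Nat.card_prod, mul_comm]⟩

end Counting

section Equivariant

variable (G T U : Type*) [Group G] [MulAction G T] [MulAction G U]

def equivariantPerms : Subgroup (Equiv.Perm T) where
  carrier := {e | ∀ (g : G) (t : T), e (g • t) = g • e t}
  mul_mem' he hf g t := by rw [Equiv.Perm.mul_apply, Equiv.Perm.mul_apply, hf g, he g]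
  one_mem' _ _ := rfl
  inv_mem' he := Equiv.symm_apply_smul_of_apply_smul he

abbrev EquivariantMaps := {f : T → U // ∀ (g : G) (t : T), f (g • t) = g • f t}

variable {G T U}

instance : MulAction (equivariantPerms G T) (EquivariantMaps G T U) where
  smul e f := ⟨fun t => f.1 ((e : Equiv.Perm T).symm t), fun g t =>
    (congrArg f.1 (Equiv.symm_apply_smul_of_apply_smul e.2 g t)).trans (f.2 g _)⟩
  one_smul _ := rfl
  mul_smul _ _ _ := rfl

theorem equivariantPerms_smul_apply (e : equivariantPerms G T) (f : EquivariantMaps G T U)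
    (t : T) : (e • f).1 t = f.1 ((e : Equiv.Perm T).symm t) := rfl

theorem EquivariantMaps.ext_of_apply_eq [IsPretransitive G T] {f f' : EquivariantMaps G T U}
    {t₀ : T} (h : f.1 t₀ = f'.1 t₀) : f = f' := by
  refine Subtype.ext (funext fun t => ?_)
  obtain ⟨g, rfl⟩ := exists_smul_eq G t₀ t
  rw [f.2, f'.2, h]

theorem stabilizer_equivariantPerms_eq_bot [IsPretransitive G T] (t : T) :
    stabilizer (equivariantPerms G T) t = ⊥ := by
  refine (Subgroup.eq_bot_iff_forall _).mpr fun e he => ?_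
  have : (⟨e, e.2⟩ : EquivariantMaps G T T) = ⟨id, fun _ _ => rfl⟩ :=
    EquivariantMaps.ext_of_apply_eq (t₀ := t) he
  exact Subtype.ext (Equiv.ext fun t => congrFun (congrArg Subtype.val this) t)

end Equivariant

section Fiber

variable {G T U : Type*} [Group G] [MulAction G T] [MulAction G U]

theorem card_preimage_smul_singleton {f : T → U} (hf : ∀ (g : G) (t : T), f (g • t) = g • f t)
    (g : G) (u : U) : Nat.card (f ⁻¹' {g • u}) = Nat.card (f ⁻¹' {u}) :=
  (Nat.card_congr (Equiv.subtypeEquiv (toPerm g) fun t => by simp [hf])).symm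

theorem card_eq_card_mul_card_preimage_singleton [IsPretransitive G U] [Finite T] [Finite U]
    {f : T → U} (hf : ∀ (g : G) (t : T), f (g • t) = g • f t) (u : U) :
    Nat.card T = Nat.card U * Nat.card (f ⁻¹' {u}) := by
  have hfib (u' : U) : Nat.card {t // f t = u'} = Nat.card (f ⁻¹' {u}) := by
    obtain ⟨g, rfl⟩ := exists_smul_eq G u u'
    exact card_preimage_smul_singleton hf g u
  have := Fintype.ofFinite U
  rw [← Nat.card_congr (Equiv.sigmaFiberEquiv f), Nat.card_sigma,
    Finset.sum_congr rfl fun u' _ => hfib u', Finset.sum_const, Finset.card_univ, smul_eq_mul,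
    Nat.card_eq_fintype_card (α := U)]

theorem card_preimage_singleton_eq_card_div [IsPretransitive G U] [Finite T] [Finite U]
    {f : T → U} (hf : ∀ (g : G) (t : T), f (g • t) = g • f t) (u : U) :
    Nat.card (f ⁻¹' {u}) = Nat.card T / Nat.card U := by
  have : Nonempty U := ⟨u⟩
  rw [card_eq_card_mul_card_preimage_singleton hf u, Nat.mul_div_cancel_left _ Nat.card_pos]

theorem apply_apply_eq_of_mem_stabilizer {f : EquivariantMaps G T U} {e : equivariantPerms G T}
    (he : e ∈ stabilizer (equivariantPerms G T) f) (t : T) :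
    f.1 ((e : Equiv.Perm T) t) = f.1 t := by
  conv_lhs => rw [← he]
  rw [equivariantPerms_smul_apply, Equiv.symm_apply_apply]

theorem card_stabilizer_dvd_card_preimage_singleton [IsPretransitive G T]
    (f : EquivariantMaps G T U) (u : U) :
    Nat.card (stabilizer (equivariantPerms G T) f) ∣ Nat.card (f.1 ⁻¹' {u}) := by
  let fiber : SubMulAction (stabilizer (equivariantPerms G T) f) T :=
    { carrier := f.1 ⁻¹' {u}
      smul_mem' := fun e t ht => (apply_apply_eq_of_mem_stabilizer e.2 t).trans ht }
  refine card_dvd_card_of_stabilizer_eq_bot (X := fiber) fun t => ?_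
  refine (Subgroup.eq_bot_iff_forall _).mpr fun e he => Subtype.ext ?_
  have : (e : equivariantPerms G T) ∈ stabilizer _ (t : T) := congrArg Subtype.val he
  rwa [stabilizer_equivariantPerms_eq_bot, Subgroup.mem_bot] at this

theorem card_stabilizer_dvd_card_div [IsPretransitive G T] [IsPretransitive G U] [Finite T]
    [Finite U] [Nonempty T] (f : EquivariantMaps G T U) :
    Nat.card (stabilizer (equivariantPerms G T) f) ∣ Nat.card T / Nat.card U := by
  obtain ⟨t₀⟩ := ‹Nonempty T›
  rw [← card_preimage_singleton_eq_card_div f.2 (f.1 t₀)]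
  exact card_stabilizer_dvd_card_preimage_singleton f _

end Fiber

end MulAction

open MulAction

namespace IsPGroup

variable {p : ℕ} [Fact p.Prime] {G T U : Type*} [Group G] [MulAction G T] [MulAction G U]
  [IsPretransitive G T] [Finite T] [Nonempty T]

theorem exists_card_eq_pow_of_isPretransitive (hG : IsPGroup p G) : ∃ n, Nat.card T = p ^ n := by
  obtain ⟨t₀⟩ := ‹Nonempty T›
  obtain ⟨n, hn⟩ := hG.card_orbit t₀
  rw [orbit_eq_univ, Nat.card_univ] at hn
  exact ⟨n, hn⟩

theorem exists_card_div_eq_pow [IsPretransitive G U] [Finite U] (hG : IsPGroup p G) {f : T → U}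
    (hf : ∀ (g : G) (t : T), f (g • t) = g • f t) : ∃ k, Nat.card T / Nat.card U = p ^ k := by
  obtain ⟨t₀⟩ := ‹Nonempty T›
  obtain ⟨n, hn⟩ := hG.exists_card_eq_pow_of_isPretransitive (T := T)
  have hdvd : Nat.card (f ⁻¹' {f t₀}) ∣ p ^ n :=
    hn ▸ Dvd.intro_left _ (card_eq_card_mul_card_preimage_singleton hf _).symm
  obtain ⟨k, -, hk⟩ := (Nat.dvd_prime_pow Fact.out).mp hdvd
  exact ⟨k, card_preimage_singleton_eq_card_div hf _ ▸ hk⟩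

theorem mul_card_equivariantPerms_dvd_card_mul_pow [IsPretransitive G U] [Finite U]
    (hG : IsPGroup p G) {f : T → U} (hf : ∀ (g : G) (t : T), f (g • t) = g • f t) :
    p * Nat.card (equivariantPerms G T) ∣
      Nat.card (EquivariantMaps G T U) * p ^ (Nat.card T / Nat.card U) := by
  obtain ⟨k, hk⟩ := hG.exists_card_div_eq_pow hf
  refine mul_card_dvd_card_mul_of_forall_mul_card_stabilizer_dvd fun f' => ?_
  calc p * Nat.card (stabilizer (equivariantPerms G T) f') ∣ p * p ^ k :=
        mul_dvd_mul_left p (hk ▸ card_stabilizer_dvd_card_div f')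
    _ = p ^ (k + 1) := (pow_succ' p k).symm
    _ ∣ p ^ (Nat.card T / Nat.card U) :=
        pow_dvd_pow p (hk ▸ Nat.lt_pow_self (Fact.out : p.Prime).one_lt)

end IsPGroup

theorem prime_mul_card_aut_dvd_card_maps_mul_pow_general
    {p : ℕ} (hp : p.Prime) {G T U : Type*} [Group G]
    (hG : IsPGroup p G)
    [MulAction G T] [MulAction G U]
    [Fintype T] [Fintype U] [Nonempty T]
    [MulAction.IsPretransitive G T] [MulAction.IsPretransitive G U]
    (hex : ∃ f : T → U, ∀ (g : G) (t : T), f (g • t) = g • f t) :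
    ∀ s : ℤ, (p : ℤ) ∣ s →
      (p : ℤ) * (Nat.card {e : T ≃ T // ∀ (g : G) (t : T), e (g • t) = g • e t} : ℤ) ∣
        (Nat.card {f : T → U // ∀ (g : G) (t : T), f (g • t) = g • f t} : ℤ) *
          s ^ (Fintype.card T / Fintype.card U) := by
  intro s hs
  have : Fact p.Prime := ⟨hp⟩
  obtain ⟨f, hf⟩ := hex
  have key := hG.mul_card_equivariantPerms_dvd_card_mul_pow hf
  rw [Nat.card_eq_fintype_card (α := T), Nat.card_eq_fintype_card (α := U)] at key
  calc _ ∣ (Nat.card (EquivariantMaps G T U) : ℤ) * (p : ℤ) ^ (Fintype.card T / Fintype.card U) :=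
        mod_cast key
    _ ∣ _ := mul_dvd_mul_left _ (pow_dvd_pow_of_dvd hs _)

/-- Let p be a prime, G a nontrivial finite p-group, and T, U finite nonempty transitive
G-sets such that a G-map T → U exists and #U < #T. Then for every integer s divisible
by p, p · #Aut_G(T) divides φ_T(U) · s^(#T/#U) in ℤ. -/
theorem prime_mul_card_aut_dvd_card_maps_mul_pow
    {p : ℕ} (hp : p.Prime) {G T U : Type*} [Group G] [Finite G] [Nontrivial G]
    (hG : IsPGroup p G)
    [MulAction G T] [MulAction G U]
    [Fintype T] [Fintype U] [Nonempty T] [Nonempty U]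
    [MulAction.IsPretransitive G T] [MulAction.IsPretransitive G U]
    (hex : ∃ f : T → U, ∀ (g : G) (t : T), f (g • t) = g • f t)
    (hlt : Fintype.card U < Fintype.card T) :
    ∀ s : ℤ, (p : ℤ) ∣ s →
      (p : ℤ) * (Nat.card {e : T ≃ T // ∀ (g : G) (t : T), e (g • t) = g • e t} : ℤ) ∣
        (Nat.card {f : T → U // ∀ (g : G) (t : T), f (g • t) = g • f t} : ℤ) *
          s ^ (Fintype.card T / Fintype.card U) :=
  prime_mul_card_aut_dvd_card_maps_mul_pow_general hp hG hex
end

section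
/- Let p be a prime, d ≥ 1, and let H be a finite-index additive subgroup of ℤ_p^d. Then the set of subgroups K of H with index [H : K] = p is finite and has exactly 1 + p + p² + ⋯ + p^{d−1} elements. -/
section Aux

open PadicInt


open PadicInt

variable (p : ℕ) [Fact p.Prime]

/-- Every additive hom `ℤ_[p] →+ ZMod p` is `x ↦ toZMod x * f 1`. -/
lemma hom_eq_toZMod (f : ℤ_[p] →+ ZMod p) (x : ℤ_[p]) :
    f x = PadicInt.toZMod x * f 1 := by
  have hmem : x - (zmodRepr x : ℤ_[p]) ∈ Ideal.span {(p : ℤ_[p])} := by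
    rw [← PadicInt.maximalIdeal_eq_span_p]; exact sub_zmodRepr_mem x
  obtain ⟨w, hw⟩ := Ideal.mem_span_singleton'.mp hmem
  have hx : x = (zmodRepr x : ℤ_[p]) + w * (p : ℤ_[p]) := by linear_combination -hw
  have h1 : f ((zmodRepr x : ℤ_[p])) = (zmodRepr x : ZMod p) * f 1 := by
    calc f ((zmodRepr x : ℤ_[p])) = f ((zmodRepr x) • (1 : ℤ_[p])) := by norm_num
      _ = (zmodRepr x) • f 1 := map_nsmul f _ _
      _ = (zmodRepr x : ZMod p) * f 1 := nsmul_eq_mul _ _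
  have h2 : f (w * (p : ℤ_[p])) = 0 := by
    calc f (w * (p : ℤ_[p])) = f (p • w) := by rw [nsmul_eq_mul, mul_comm]
      _ = p • f w := map_nsmul f _ _
      _ = 0 := by rw [nsmul_eq_mul, ZMod.natCast_self, zero_mul]
  have h3 : (PadicInt.toZMod x : ZMod p) = (zmodRepr x : ZMod p) := rfl
  rw [hx, map_add, h1, h2, add_zero, ← hx, h3]

/-- The homs `ℤ_[p] →+ ZMod p` are equivalent to `ZMod p`. -/
noncomputable def homPadicEquiv : (ℤ_[p] →+ ZMod p) ≃ ZMod p where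
  toFun f := f 1
  invFun c := (AddMonoidHom.mulRight c).comp (PadicInt.toZMod (p := p)).toAddMonoidHom
  left_inv f := by
    ext x
    simp [hom_eq_toZMod p f x]
  right_inv c := by
    simp

/-- Homs out of a finite product of additive commutative monoids. -/
noncomputable def homPiEquiv {ι : Type*} [Fintype ι] [DecidableEq ι]
    (M : ι → Type*) [∀ i, AddCommMonoid (M i)] (N : Type*) [AddCommMonoid N] :
    ((∀ i, M i) →+ N) ≃ (∀ i, M i →+ N) where
  toFun f i := f.comp (AddMonoidHom.single M i)
  invFun g := ∑ i, (g i).comp (Pi.evalAddMonoidHom M i)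
  left_inv f := by
    ext i x
    rw [AddMonoidHom.comp_apply, AddMonoidHom.finset_sum_apply]
    simp only [AddMonoidHom.coe_comp, Function.comp_apply, Pi.evalAddMonoidHom_apply]
    rw [Finset.sum_eq_single i]
    · simp
    · intro j _ hj
      simp [AddMonoidHom.single_apply, Pi.single_eq_of_ne hj]
    · simp
  right_inv g := by
    ext i x
    rw [AddMonoidHom.comp_apply, AddMonoidHom.finset_sum_apply]
    simp only [AddMonoidHom.coe_comp, Function.comp_apply, Pi.evalAddMonoidHom_apply]
    rw [Finset.sum_eq_single i]
    · simp
    · intro j _ hj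
      simp [AddMonoidHom.single_apply, Pi.single_eq_of_ne hj]
    · simp

variable {p : ℕ} [Fact p.Prime] {A : Type*} [AddCommGroup A]

lemma ker_index_eq_p {f : A →+ ZMod p} (hf : f ≠ 0) : f.ker.index = p := by
  haveI : Fact (Nat.card (ZMod p)).Prime := by rwa [Nat.card_zmod]
  rw [AddSubgroup.index_ker]
  rcases f.range.eq_bot_or_eq_top_of_prime_card with h | h
  · exfalso
    apply hf
    ext x
    have : f x ∈ f.range := ⟨x, rfl⟩
    rw [h, AddSubgroup.mem_bot] at this
    simpa using this
  · rw [h, AddSubgroup.card_top, Nat.card_zmod]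

lemma exists_hom_of_index_p {N : AddSubgroup A} (hN : N.index = p) :
    ∃ g : A →+ ZMod p, Function.Surjective g ∧ g.ker = N := by
  have hcard : Nat.card (A ⧸ N) = p := by rwa [← AddSubgroup.index_eq_card]
  haveI : IsAddCyclic (A ⧸ N) := isAddCyclic_of_prime_card hcard
  let e : ZMod p ≃+ (A ⧸ N) := hcard ▸ zmodAddCyclicAddEquiv (inferInstance : IsAddCyclic (A ⧸ N))
  refine ⟨e.symm.toAddMonoidHom.comp (QuotientAddGroup.mk' N), ?_, ?_⟩
  · exact e.symm.surjective.comp (QuotientAddGroup.mk'_surjective N)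
  · ext x
    simp only [AddMonoidHom.mem_ker, AddMonoidHom.comp_apply, AddEquiv.coe_toAddMonoidHom]
    rw [AddEquiv.map_eq_zero_iff]
    exact QuotientAddGroup.eq_zero_iff x

lemma hom_eq_of_ker_eq {f g : A →+ ZMod p} (h : f.ker = g.ker) {a : A} (ha : g a = 1)
    (x : A) : f x = f a * g x := by
  have hx : x - (g x).val • a ∈ g.ker := by
    simp only [AddMonoidHom.mem_ker, map_sub, map_nsmul, ha, nsmul_eq_mul, mul_one]
    rw [ZMod.natCast_val, ZMod.cast_id, sub_self]
  rw [← h, AddMonoidHom.mem_ker, map_sub, map_nsmul, sub_eq_zero] at hx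
  rw [hx, nsmul_eq_mul, ZMod.natCast_val, ZMod.cast_id, mul_comm]

theorem count_index_p_of_homs [Finite (A →+ ZMod p)] :
    Finite {N : AddSubgroup A // N.index = p} ∧
      Nat.card {N : AddSubgroup A // N.index = p} * (p - 1) =
        Nat.card (A →+ ZMod p) - 1 := by
  classical
  choose g hsurj hker using
    fun N : {N : AddSubgroup A // N.index = p} => exists_hom_of_index_p (p := p) N.2
  choose a ha using fun N => hsurj N 1
  have key : ∀ (f : {f : A →+ ZMod p // f ≠ 0}) (x : A),
      f.1 x = f.1 (a ⟨f.1.ker, ker_index_eq_p f.2⟩) * g ⟨f.1.ker, ker_index_eq_p f.2⟩ x :=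
    fun f x => hom_eq_of_ker_eq (by rw [hker]) (ha _) x
  have hne : ∀ f : {f : A →+ ZMod p // f ≠ 0},
      f.1 (a ⟨f.1.ker, ker_index_eq_p f.2⟩) ≠ 0 := by
    intro f h0
    apply f.2
    ext x
    rw [key f x, h0, zero_mul, AddMonoidHom.zero_apply]
  have hgker : ∀ (N : {N : AddSubgroup A // N.index = p}) (u : (ZMod p)ˣ),
      ((AddMonoidHom.mulLeft (u : ZMod p)).comp (g N)).ker = N.1 := by
    intro N u
    ext x
    simp only [AddMonoidHom.mem_ker, AddMonoidHom.comp_apply, AddMonoidHom.coe_mulLeft]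
    rw [mul_eq_zero]
    simp only [Units.ne_zero, false_or]
    rw [← AddMonoidHom.mem_ker, hker]
  let E : {f : A →+ ZMod p // f ≠ 0} ≃ {N : AddSubgroup A // N.index = p} × (ZMod p)ˣ :=
  { toFun := fun f => (⟨f.1.ker, ker_index_eq_p f.2⟩,
      Units.mk0 (f.1 (a ⟨f.1.ker, ker_index_eq_p f.2⟩)) (hne f))
    invFun := fun Nu => ⟨(AddMonoidHom.mulLeft (Nu.2 : ZMod p)).comp (g Nu.1), by
      intro h0
      have := ha Nu.1
      have h1 : ((AddMonoidHom.mulLeft (Nu.2 : ZMod p)).comp (g Nu.1)) (a Nu.1) = 0 := by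
        rw [h0]; rfl
      rw [AddMonoidHom.comp_apply, this, AddMonoidHom.coe_mulLeft, mul_one] at h1
      exact Nu.2.ne_zero h1⟩
    left_inv := by
      intro f
      apply Subtype.ext
      ext x
      rw [AddMonoidHom.comp_apply, AddMonoidHom.coe_mulLeft, Units.val_mk0]
      exact (key f x).symm
    right_inv := by
      intro ⟨N, u⟩
      have h1 : (⟨((AddMonoidHom.mulLeft (u : ZMod p)).comp (g N)).ker,
          ker_index_eq_p (f := (AddMonoidHom.mulLeft (u : ZMod p)).comp (g N)) (by
            intro h0
            have h1 : ((AddMonoidHom.mulLeft (u : ZMod p)).comp (g N)) (a N) = 0 := by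
              rw [h0]; rfl
            rw [AddMonoidHom.comp_apply, ha N, AddMonoidHom.coe_mulLeft, mul_one] at h1
            exact u.ne_zero h1)⟩ : {N : AddSubgroup A // N.index = p}) = N :=
        Subtype.ext (hgker N u)
      refine Prod.ext h1 ?_
      apply Units.ext
      rw [Units.val_mk0]
      show ((AddMonoidHom.mulLeft (u : ZMod p)).comp (g N)) (a _) = u
      rw [h1, AddMonoidHom.comp_apply, ha N, AddMonoidHom.coe_mulLeft, mul_one] }
  haveI : Fintype (A →+ ZMod p) := Fintype.ofFinite _
  have hfinS : Finite {N : AddSubgroup A // N.index = p} := by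
    refine Finite.of_injective (fun N => E.symm (N, 1)) ?_
    intro N N' h
    have := E.symm.injective h
    exact (Prod.ext_iff.mp this).1
  refine ⟨hfinS, ?_⟩
  have hcard1 : Nat.card {f : A →+ ZMod p // f ≠ 0} = Nat.card (A →+ ZMod p) - 1 := by
    rw [Nat.card_eq_fintype_card, Nat.card_eq_fintype_card]
    have h := Fintype.card_subtype_compl (fun f : A →+ ZMod p => f = 0)
    rw [Fintype.card_subtype_eq] at h
    exact h
  have hcard2 : Nat.card {f : A →+ ZMod p // f ≠ 0} =
      Nat.card {N : AddSubgroup A // N.index = p} * (p - 1) := by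
    rw [Nat.card_congr E, Nat.card_prod]
    congr 1
    rw [Nat.card_eq_fintype_card, ZMod.card_units]
  rw [← hcard2, hcard1]

variable {p : ℕ} [Fact p.Prime]

lemma exists_smul_pow_mem {d : ℕ} (H : AddSubgroup (Fin d → ℤ_[p])) (hH : H.index ≠ 0) :
    ∃ k : ℕ, ∀ x : Fin d → ℤ_[p], ((p : ℤ_[p]) ^ k) • x ∈ H := by
  set n := H.index with hn
  set k := n.factorization p with hkdef
  have hmn : p ^ k * (n / p ^ k) = n := Nat.ordProj_mul_ordCompl_eq_self n p
  have hpm : ¬ (p ∣ (n / p ^ k)) := Nat.not_dvd_ordCompl Fact.out hH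
  have hum : IsUnit ((n / p ^ k : ℕ) : ℤ_[p]) := by
    rw [PadicInt.isUnit_iff]
    have h1 := PadicInt.norm_int_lt_one_iff_dvd (p := p) ((n / p ^ k : ℕ) : ℤ)
    have h2 : ‖(((n / p ^ k : ℕ) : ℤ) : ℤ_[p])‖ ≤ 1 := PadicInt.norm_le_one _
    have h3 : ¬ ((p : ℤ) ∣ ((n / p ^ k : ℕ) : ℤ)) := by exact_mod_cast hpm
    have h4 : ¬ (‖(((n / p ^ k : ℕ) : ℤ) : ℤ_[p])‖ < 1) := fun hc => h3 (h1.mp hc)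
    have hcast : (((n / p ^ k : ℕ) : ℤ) : ℤ_[p]) = ((n / p ^ k : ℕ) : ℤ_[p]) := by
      norm_cast
    rw [hcast] at h2 h4
    rcases lt_or_eq_of_le h2 with h | h
    · exact absurd h h4
    · exact h
  obtain ⟨u, hu⟩ := hum
  refine ⟨k, fun x => ?_⟩
  have h := AddSubgroup.nsmul_index_mem H (((u⁻¹ : ℤ_[p]ˣ) : ℤ_[p]) • x)
  rw [← Nat.cast_smul_eq_nsmul ℤ_[p]] at h
  have heq : ((H.index : ℤ_[p])) • (((u⁻¹ : ℤ_[p]ˣ) : ℤ_[p]) • x) = ((p : ℤ_[p]) ^ k) • x := by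
    rw [smul_smul, ← hn, ← hmn]
    push_cast
    rw [mul_assoc, ← hu, Units.mul_inv, mul_one]
  rwa [heq] at h

lemma exists_submodule {d : ℕ} (H : AddSubgroup (Fin d → ℤ_[p])) {k : ℕ}
    (hk : ∀ x : Fin d → ℤ_[p], ((p : ℤ_[p]) ^ k) • x ∈ H) :
    ∃ M : Submodule ℤ_[p] (Fin d → ℤ_[p]), M.toAddSubgroup = H := by
  refine ⟨{ carrier := H,
            add_mem' := fun ha hb => H.add_mem ha hb,
            zero_mem' := H.zero_mem,
            smul_mem' := ?_ }, ?_⟩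
  · intro c x hx
    obtain ⟨w, hw⟩ := Ideal.mem_span_singleton'.mp (PadicInt.appr_spec k c)
    have hc : c = (PadicInt.appr c k : ℤ_[p]) + w * (p : ℤ_[p]) ^ k := by
      linear_combination -hw
    show c • x ∈ H
    rw [hc, add_smul]
    apply H.add_mem
    · rw [Nat.cast_smul_eq_nsmul]
      exact AddSubgroup.nsmul_mem H hx _
    · rw [show (w * (p : ℤ_[p]) ^ k) • x = ((p : ℤ_[p]) ^ k) • (w • x) by
        rw [smul_smul, mul_comm]]
      exact hk _
  · rfl

lemma exists_linear_equiv {d : ℕ} (M : Submodule ℤ_[p] (Fin d → ℤ_[p])) {k : ℕ}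
    (hk : ∀ x : Fin d → ℤ_[p], ((p : ℤ_[p]) ^ k) • x ∈ M) :
    Nonempty ((Fin d → ℤ_[p]) ≃ₗ[ℤ_[p]] M) := by
  haveI : IsNoetherianRing ℤ_[p] := PrincipalIdealRing.isNoetherianRing
  haveI : IsNoetherian ℤ_[p] (Fin d → ℤ_[p]) := isNoetherian_of_isNoetherianRing_of_finite ℤ_[p] _
  haveI : IsNoetherian ℤ_[p] M := isNoetherian_submodule' M
  haveI : Module.Finite ℤ_[p] M := inferInstance
  haveI : Module.Free ℤ_[p] M := Module.free_of_finite_type_torsion_free'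
  have hrank : Module.rank ℤ_[p] M = d := by
    apply le_antisymm
    · rw [← rank_fin_fun (R := ℤ_[p]) d]
      exact M.rank_le
    · let f : (Fin d → ℤ_[p]) →ₗ[ℤ_[p]] M :=
        LinearMap.codRestrict M (((p : ℤ_[p]) ^ k) • LinearMap.id) (fun x => hk x)
      have hinj : Function.Injective f := by
        intro x y hxy
        have h2 : ((p : ℤ_[p]) ^ k) • x = ((p : ℤ_[p]) ^ k) • y :=
          congrArg Subtype.val hxy
        refine smul_right_injective _ (pow_ne_zero k ?_) h2
        exact_mod_cast (Fact.out : p.Prime).ne_zero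
      calc (d : Cardinal) = Module.rank ℤ_[p] (Fin d → ℤ_[p]) := (rank_fin_fun d).symm
        _ ≤ Module.rank ℤ_[p] M := f.rank_le_of_injective hinj
  have hfin : Module.finrank ℤ_[p] M = d := Module.finrank_eq_of_rank_eq hrank
  exact ⟨(((Module.finBasis ℤ_[p] M).reindex (finCongr hfin)).equivFun).symm⟩

lemma geom_aux (p d : ℕ) (hp : 1 ≤ p) :
    (∑ i ∈ Finset.range d, p ^ i) * (p - 1) = p ^ d - 1 := by
  induction d with
  | zero => simp
  | succ d ih =>
    obtain ⟨q, rfl⟩ : ∃ q, p = q + 1 := ⟨p - 1, by omega⟩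
    rw [Finset.sum_range_succ, add_mul, ih, pow_succ]
    have h1 : 1 ≤ (q + 1) ^ d := Nat.one_le_pow _ _ (by omega)
    simp only [Nat.add_sub_cancel]
    rw [Nat.mul_add, Nat.mul_one]
    generalize hb : (q + 1) ^ d * q = b
    generalize ha : (q + 1) ^ d = a at h1 ⊢
    omega

end Aux

/-- Let p be a prime, d ≥ 1, and H a finite-index additive subgroup of ℤ_p^d. Then the
set of subgroups K of H with index [H : K] = p is finite with exactly
1 + p + ⋯ + p^(d-1) elements. -/
theorem card_index_p_subgroups_of_padic
    (p : ℕ) [Fact p.Prime] (d : ℕ) (hd : 1 ≤ d)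
    (H : AddSubgroup (Fin d → ℤ_[p])) (hH : H.index ≠ 0) :
    {K : AddSubgroup (Fin d → ℤ_[p]) | K ≤ H ∧ (K.addSubgroupOf H).index = p}.Finite ∧
      Nat.card {K : AddSubgroup (Fin d → ℤ_[p]) | K ≤ H ∧ (K.addSubgroupOf H).index = p} =
        ∑ i ∈ Finset.range d, p ^ i := by
  classical
  obtain ⟨k, hk⟩ := exists_smul_pow_mem H hH
  obtain ⟨M, hM⟩ := exists_submodule H hk
  have hkM : ∀ x : Fin d → ℤ_[p], ((p : ℤ_[p]) ^ k) • x ∈ M := by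
    intro x
    rw [← Submodule.mem_toAddSubgroup, hM]
    exact hk x
  obtain ⟨ι⟩ := exists_linear_equiv M hkM
  let bridge : M ≃+ H :=
    { toFun := fun x => ⟨x.1, by rw [← hM]; exact (Submodule.mem_toAddSubgroup M).mpr x.2⟩
      invFun := fun x => ⟨x.1, by
        have hx2 : (x : Fin d → ℤ_[p]) ∈ M.toAddSubgroup := by rw [hM]; exact x.2
        exact (Submodule.mem_toAddSubgroup M).mp hx2⟩
      left_inv := fun x => rfl
      right_inv := fun x => rfl
      map_add' := fun x y => rfl }
  let e : (Fin d → ℤ_[p]) ≃+ H := ι.toAddEquiv.trans bridge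
  have hcompid : e.toAddMonoidHom.comp e.symm.toAddMonoidHom = AddMonoidHom.id H := by
    ext x; simp
  have hcompid' : e.symm.toAddMonoidHom.comp e.toAddMonoidHom =
      AddMonoidHom.id (Fin d → ℤ_[p]) := by
    ext x; simp
  let E1 : ↥{K : AddSubgroup (Fin d → ℤ_[p]) | K ≤ H ∧ (K.addSubgroupOf H).index = p} ≃
      {N : AddSubgroup H // N.index = p} :=
    { toFun := fun K => ⟨K.1.addSubgroupOf H, K.2.2⟩
      invFun := fun N => ⟨N.1.map H.subtype,
        ⟨AddSubgroup.map_subtype_le N.1,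
          by rw [show (N.1.map H.subtype).addSubgroupOf H = N.1 from
            AddSubgroup.comap_map_eq_self_of_injective H.subtype_injective N.1]; exact N.2⟩⟩
      left_inv := fun K => Subtype.ext (by
        show ((K.1.addSubgroupOf H).map H.subtype) = K.1
        rw [AddSubgroup.addSubgroupOf_map_subtype, inf_eq_left.mpr K.2.1])
      right_inv := fun N => Subtype.ext
        (AddSubgroup.comap_map_eq_self_of_injective H.subtype_injective N.1) }
  let E2 : {N : AddSubgroup H // N.index = p} ≃
      {N : AddSubgroup (Fin d → ℤ_[p]) // N.index = p} :=
    { toFun := fun N => ⟨N.1.comap e.toAddMonoidHom, by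
        rw [AddSubgroup.index_comap_of_surjective N.1 e.surjective]; exact N.2⟩
      invFun := fun N => ⟨N.1.comap e.symm.toAddMonoidHom, by
        rw [AddSubgroup.index_comap_of_surjective N.1 e.symm.surjective]; exact N.2⟩
      left_inv := fun N => Subtype.ext (by
        show (N.1.comap e.toAddMonoidHom).comap e.symm.toAddMonoidHom = N.1
        rw [AddSubgroup.comap_comap, hcompid, AddSubgroup.comap_id])
      right_inv := fun N => Subtype.ext (by
        show (N.1.comap e.symm.toAddMonoidHom).comap e.toAddMonoidHom = N.1
        rw [AddSubgroup.comap_comap, hcompid', AddSubgroup.comap_id]) }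
  let Ehom : ((Fin d → ℤ_[p]) →+ ZMod p) ≃ (Fin d → ZMod p) :=
    (homPiEquiv _ _).trans (Equiv.piCongrRight fun _ => homPadicEquiv p)
  haveI : Finite ((Fin d → ℤ_[p]) →+ ZMod p) := Finite.of_equiv _ Ehom.symm
  obtain ⟨hfinS, hcount⟩ := count_index_p_of_homs (p := p) (A := Fin d → ℤ_[p])
  have hhom : Nat.card ((Fin d → ℤ_[p]) →+ ZMod p) = p ^ d := by
    rw [Nat.card_congr Ehom, Nat.card_pi]
    simp [Nat.card_zmod]
  let E := E1.trans E2
  haveI : Finite ↥{K : AddSubgroup (Fin d → ℤ_[p]) | K ≤ H ∧ (K.addSubgroupOf H).index = p} :=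
    Finite.of_equiv _ E.symm
  refine ⟨Set.toFinite _, ?_⟩
  rw [Nat.card_congr E]
  have hp2 : 2 ≤ p := (Fact.out : p.Prime).two_le
  apply Nat.eq_of_mul_eq_mul_right (show 0 < p - 1 by omega)
  rw [hcount, hhom, geom_aux p d (by omega)]
end

section
/- Let p be a prime, d ≥ 1, and let H be a finite-index additive subgroup of ℤ_p^d with H ⊆ p·ℤ_p^d. Then the set of additive subgroups K of ℤ_p^d with H ⊆ K and index [K : H] = p is finite and has exactly 1 + p + p² + ⋯ + p^{d−1} elements. -/
/-- The subgroup p^n·ℤ_p^d of ℤ_p^d, i.e. the range of multiplication by p^n. -/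
noncomputable def pPowSubgroup (p : ℕ) [Fact p.Prime] (d n : ℕ) : AddSubgroup (Fin d → ℤ_[p]) :=
  (DistribMulAction.toAddMonoidHom (Fin d → ℤ_[p]) ((p : ℤ_[p]) ^ n)).range

open AddSubgroup QuotientAddGroup Finset

/-- Cardinality of image of a subgroup in the quotient. -/
lemma aux_card_map_mk' {G : Type*} [AddCommGroup G] (H K : AddSubgroup G) (hHK : H ≤ K) :
    Nat.card (K.map (QuotientAddGroup.mk' H)) = (H.addSubgroupOf K).index := by
  rw [AddSubgroup.index_eq_card]
  have hker : ((QuotientAddGroup.mk' H).addSubgroupMap K).ker = H.addSubgroupOf K := by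
    ext x
    simp only [AddMonoidHom.mem_ker, AddSubgroup.mem_addSubgroupOf]
    constructor
    · intro h
      have : (QuotientAddGroup.mk' H) (x : G) = 0 := congrArg Subtype.val h
      rwa [QuotientAddGroup.mk'_apply, QuotientAddGroup.eq_zero_iff] at this
    · intro h
      apply Subtype.ext
      show (QuotientAddGroup.mk' H) (x : G) = 0
      rwa [← QuotientAddGroup.ker_mk' H, AddMonoidHom.mem_ker] at h
  rw [← hker]
  exact (Nat.card_congr (QuotientAddGroup.quotientKerEquivOfSurjective _
    ((QuotientAddGroup.mk' H).addSubgroupMap_surjective K)).toEquiv).symm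

/-- Counting subgroups of order p in a finite abelian group whose p-torsion has order p^d. -/
lemma aux_count {A : Type*} [AddCommGroup A] [Finite A] {p d : ℕ} (hp : p.Prime)
    (Ω : AddSubgroup A) (hΩmem : ∀ a : A, a ∈ Ω ↔ p • a = 0)
    (hΩcard : Nat.card Ω = p ^ d) :
    Nat.card {L : AddSubgroup A | Nat.card L = p} = ∑ i ∈ Finset.range d, p ^ i := by
  classical
  have : Fintype A := Fintype.ofFinite A
  have : Fintype (AddSubgroup A) :=
    Fintype.ofFinite _
  set S : Finset A := Finset.univ.filter (fun a => a ≠ 0 ∧ p • a = 0) with hS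
  set T : Finset (AddSubgroup A) := Finset.univ.filter (fun L => Nat.card L = p) with hT
  -- order of nonzero p-torsion element is p
  have horder : ∀ a : A, a ≠ 0 → p • a = 0 → addOrderOf a = p := by
    intro a ha h0
    have hdvd : addOrderOf a ∣ p := addOrderOf_dvd_of_nsmul_eq_zero h0
    rcases (Nat.dvd_prime hp).mp hdvd with h1 | h1
    · exact absurd (AddMonoid.addOrderOf_eq_one_iff.mp h1) ha
    · exact h1
  -- card of S
  have hScard : S.card = p ^ d - 1 := by
    have hSeq : S = (Ω : Set A).toFinset.erase 0 := by
      ext a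
      simp [hS, hΩmem, and_comm]
    have hΩfin : (Ω : Set A).toFinset.card = p ^ d := by
      rw [Set.toFinset_card, ← Nat.card_eq_fintype_card]
      exact hΩcard
    rw [hSeq, Finset.card_erase_of_mem (by simp [hΩmem]), hΩfin]
  -- fibers
  have hmap : ∀ a ∈ S, AddSubgroup.zmultiples a ∈ T := by
    intro a ha
    simp only [hS, Finset.mem_filter] at ha
    simp only [hT, Finset.mem_filter, Finset.mem_univ, true_and]
    rw [Nat.card_zmultiples]
    exact horder a ha.2.1 ha.2.2
  have hfiber : ∀ L ∈ T, (S.filter (fun a => AddSubgroup.zmultiples a = L)).card = p - 1 := by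
    intro L hL
    simp only [hT, Finset.mem_filter, Finset.mem_univ, true_and] at hL
    have hfin : (L : Set A).Finite := Set.toFinite _
    have hLeq : (S.filter (fun a => AddSubgroup.zmultiples a = L)) =
        (L : Set A).toFinset.erase 0 := by
      ext a
      simp only [Finset.mem_filter, Finset.mem_erase, Set.mem_toFinset, SetLike.mem_coe, hS,
        Finset.mem_univ, true_and]
      constructor
      · rintro ⟨⟨ha0, _⟩, hza⟩
        exact ⟨ha0, hza ▸ AddSubgroup.mem_zmultiples a⟩
      · rintro ⟨ha0, haL⟩
        have hpa : p • a = 0 := by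
          have h1 : addOrderOf (⟨a, haL⟩ : L) ∣ p := hL ▸ addOrderOf_dvd_natCard _
          have h2 : p • (⟨a, haL⟩ : L) = 0 := addOrderOf_dvd_iff_nsmul_eq_zero.mp h1
          have := congrArg (Subtype.val) h2
          simpa using this
        refine ⟨⟨ha0, hpa⟩, ?_⟩
        have hle : AddSubgroup.zmultiples a ≤ L := (AddSubgroup.zmultiples_le).mpr haL
        have hcard : Nat.card (AddSubgroup.zmultiples a) = p := by
          rw [Nat.card_zmultiples]; exact horder a ha0 hpa
        apply SetLike.coe_injective
        refine Set.eq_of_subset_of_ncard_le hle ?_ hfin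
        rw [← Nat.card_coe_set_eq, ← Nat.card_coe_set_eq]
        exact le_of_eq (hL.trans hcard.symm)
    rw [hLeq, Finset.card_erase_of_mem (by simpa using zero_mem L), Set.toFinset_card, ← Nat.card_eq_fintype_card]
    exact congrArg (fun n => n - 1) hL
  have hcount : S.card = T.card * (p - 1) := by
    rw [Finset.card_eq_sum_card_fiberwise hmap]
    rw [Finset.sum_congr rfl hfiber, Finset.sum_const, smul_eq_mul]
  -- geometric sum
  have hgeom : (∑ i ∈ Finset.range d, p ^ i) * (p - 1) = p ^ d - 1 := by
    have hp1 : 1 ≤ p := hp.one_lt.le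
    have hcast : ((∑ i ∈ Finset.range d, p ^ i : ℕ) : ℤ) * ((p : ℤ) - 1) = (p : ℤ) ^ d - 1 := by
      push_cast
      exact geom_sum_mul (p : ℤ) d
    have : (((∑ i ∈ Finset.range d, p ^ i) * (p - 1) : ℕ) : ℤ) = (((p ^ d - 1 : ℕ)) : ℤ) := by
      push_cast [Nat.cast_sub hp1, Nat.cast_sub (Nat.one_le_pow _ _ hp.pos)]
      rw [← hcast]; push_cast; ring
    exact_mod_cast this
  have hTcard : T.card = ∑ i ∈ Finset.range d, p ^ i := by
    have hpm1 : 0 < p - 1 := Nat.sub_pos_of_lt hp.one_lt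
    apply Nat.eq_of_mul_eq_mul_right hpm1
    rw [← hcount, hScard, hgeom]
  rw [← hTcard]
  have : {L : AddSubgroup A | Nat.card L = p} = (T : Set (AddSubgroup A)) := by
    ext L; simp [hT]
  rw [this, Nat.card_coe_set_eq, Set.ncard_coe_finset]

/-- Let p be a prime, d ≥ 1, and H a finite-index additive subgroup of ℤ_p^d with
H ⊆ p·ℤ_p^d. Then the set of additive subgroups K of ℤ_p^d with H ⊆ K and
[K : H] = p is finite with exactly 1 + p + ⋯ + p^(d-1) elements. -/
theorem card_index_p_oversubgroups_of_padic
    (p : ℕ) [Fact p.Prime] (d : ℕ) (hd : 1 ≤ d)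
    (H : AddSubgroup (Fin d → ℤ_[p])) (hH : H.index ≠ 0)
    (hHp : H ≤ pPowSubgroup p d 1) :
    {K : AddSubgroup (Fin d → ℤ_[p]) | H ≤ K ∧ (H.addSubgroupOf K).index = p}.Finite ∧
      Nat.card {K : AddSubgroup (Fin d → ℤ_[p]) | H ≤ K ∧ (H.addSubgroupOf K).index = p} =
        ∑ i ∈ Finset.range d, p ^ i := by
  classical
  have hprime : p.Prime := Fact.out
  have hfinQ : Finite ((Fin d → ℤ_[p]) ⧸ H) := by
    have h := hH
    rw [AddSubgroup.index_eq_card] at h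
    exact (Nat.card_ne_zero.mp h).2
  set ψ : (Fin d → ℤ_[p]) →+ (Fin d → ℤ_[p]) :=
    DistribMulAction.toAddMonoidHom (Fin d → ℤ_[p]) ((p : ℤ_[p]) ^ 1) with hψdef
  have hψ : ∀ x, ψ x = p • x := by
    intro x
    show ((p : ℤ_[p]) ^ 1) • x = p • x
    rw [pow_one, Nat.cast_smul_eq_nsmul]
  have hPrange : pPowSubgroup p d 1 = ψ.range := rfl
  set V := H.comap ψ with hV
  have hHV : H ≤ V := by
    intro x hx
    show ψ x ∈ H
    rw [hψ]
    exact nsmul_mem hx p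
  -- index chain
  have h1 : V.index = H.relIndex (pPowSubgroup p d 1) := by
    rw [hPrange]; exact AddSubgroup.index_comap H ψ
  have h2 := AddSubgroup.relIndex_mul_index hHV
  have h3 := AddSubgroup.relIndex_mul_index hHp
  have hne : H.relIndex (pPowSubgroup p d 1) ≠ 0 := by
    intro h0
    exact hH (by rw [← h3, h0, zero_mul])
  have hrel : H.relIndex V = (pPowSubgroup p d 1).index := by
    apply Nat.eq_of_mul_eq_mul_left (Nat.pos_of_ne_zero hne)
    calc H.relIndex (pPowSubgroup p d 1) * H.relIndex V
        = H.relIndex V * V.index := by rw [h1, mul_comm]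
      _ = H.index := h2
      _ = H.relIndex (pPowSubgroup p d 1) * (pPowSubgroup p d 1).index := h3.symm
  -- index of p·ℤ_p^d is p^d
  have hPindex : (pPowSubgroup p d 1).index = p ^ d := by
    have hp0 : p ≠ 0 := hprime.ne_zero
    haveI : NeZero p := ⟨hp0⟩
    set φ1 : ℤ_[p] →+ ZMod p := (PadicInt.toZMod (p := p)).toAddMonoidHom with hφ1def
    have hφ1surj : Function.Surjective φ1 := by
      intro z
      obtain ⟨n, rfl⟩ := ZMod.natCast_zmod_surjective (n := p) z
      exact ⟨(n : ℤ_[p]), by simp [hφ1def]⟩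
    have hker : ∀ x : ℤ_[p], x ∈ φ1.ker ↔ (p : ℤ_[p]) ∣ x := by
      intro x
      show PadicInt.toZMod x = 0 ↔ _
      rw [← RingHom.mem_ker, PadicInt.ker_toZMod, PadicInt.maximalIdeal_eq_span_p,
        Ideal.mem_span_singleton]
    have hpi : pPowSubgroup p d 1 = AddSubgroup.pi Set.univ (fun _ : Fin d => φ1.ker) := by
      ext x
      simp only [pPowSubgroup, AddMonoidHom.mem_range, AddSubgroup.mem_pi, Set.mem_univ,
        forall_true_left, hker]
      constructor
      · rintro ⟨y, rfl⟩ i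
        exact ⟨y i, by simp [pow_one]⟩
      · intro h
        choose y hy using h
        refine ⟨y, funext fun i => ?_⟩
        show ((p : ℤ_[p]) ^ 1) • y i = x i
        rw [pow_one, smul_eq_mul, ← hy i]
    rw [hpi, AddSubgroup.index_pi]
    have hk : φ1.ker.index = p := by
      rw [AddSubgroup.index_eq_card,
        Nat.card_congr (QuotientAddGroup.quotientKerEquivOfSurjective φ1 hφ1surj).toEquiv]
      exact Nat.card_zmod p
    simp [hk]
  -- the p-torsion subgroup of the quotient
  set Ω := V.map (QuotientAddGroup.mk' H) with hΩdef
  have hΩmem : ∀ a : (Fin d → ℤ_[p]) ⧸ H, a ∈ Ω ↔ p • a = 0 := by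
    intro a
    obtain ⟨x, rfl⟩ := QuotientAddGroup.mk'_surjective H a
    have hsm : ∀ z, p • (QuotientAddGroup.mk' H z) = QuotientAddGroup.mk' H (p • z) :=
      fun z => (map_nsmul (QuotientAddGroup.mk' H) p z).symm
    constructor
    · rintro ⟨v, hv, he⟩
      rw [← he, hsm]
      have : p • v ∈ H := by rw [← hψ]; exact hv
      rwa [QuotientAddGroup.mk'_apply, QuotientAddGroup.eq_zero_iff]
    · intro hpa
      refine ⟨x, ?_, rfl⟩
      show ψ x ∈ H
      rw [hψ]
      rw [hsm, QuotientAddGroup.mk'_apply, QuotientAddGroup.eq_zero_iff] at hpa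
      exact hpa
  have hΩcard : Nat.card Ω = p ^ d := by
    rw [hΩdef, aux_card_map_mk' H V hHV]
    show H.relIndex V = p ^ d
    rw [hrel, hPindex]
  -- correspondence between subgroups
  set 𝒮 := {K : AddSubgroup (Fin d → ℤ_[p]) | H ≤ K ∧ (H.addSubgroupOf K).index = p} with h𝒮
  set 𝒯 := {L : AddSubgroup ((Fin d → ℤ_[p]) ⧸ H) | Nat.card L = p} with h𝒯
  have hmemS : ∀ K, K ∈ 𝒮 → (K.map (QuotientAddGroup.mk' H)) ∈ 𝒯 := by
    intro K hK
    show Nat.card (K.map (QuotientAddGroup.mk' H)) = p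
    rw [aux_card_map_mk' H K hK.1]
    exact hK.2
  have hmemT : ∀ L, L ∈ 𝒯 → (L.comap (QuotientAddGroup.mk' H)) ∈ 𝒮 := by
    intro L hL
    have hle : H ≤ L.comap (QuotientAddGroup.mk' H) := by
      intro x hx
      have hx0 : (QuotientAddGroup.mk' H) x = 0 := by
        rw [QuotientAddGroup.mk'_apply, QuotientAddGroup.eq_zero_iff]
        exact hx
      show (QuotientAddGroup.mk' H) x ∈ L
      rw [hx0]
      exact zero_mem L
    refine ⟨hle, ?_⟩
    rw [← aux_card_map_mk' H _ hle,
      AddSubgroup.map_comap_eq_self_of_surjective (QuotientAddGroup.mk'_surjective H)]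
    exact hL
  let e : 𝒮 ≃ 𝒯 :=
    { toFun := fun K => ⟨K.1.map (QuotientAddGroup.mk' H), hmemS K.1 K.2⟩
      invFun := fun L => ⟨L.1.comap (QuotientAddGroup.mk' H), hmemT L.1 L.2⟩
      left_inv := fun K => Subtype.ext (by
        simp only
        rw [AddSubgroup.comap_map_eq, QuotientAddGroup.ker_mk', sup_eq_left.mpr K.2.1])
      right_inv := fun L => Subtype.ext (by
        simp only
        rw [AddSubgroup.map_comap_eq_self_of_surjective (QuotientAddGroup.mk'_surjective H)]) }
  haveI : Finite (AddSubgroup ((Fin d → ℤ_[p]) ⧸ H)) :=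
    Finite.of_injective _ (SetLike.coe_injective (A := AddSubgroup ((Fin d → ℤ_[p]) ⧸ H)))
  haveI : Finite ↥𝒯 := Subtype.finite
  constructor
  · rw [← Set.finite_coe_iff]
    exact Finite.of_equiv _ e.symm
  · rw [Nat.card_congr e]
    exact aux_count hprime Ω hΩmem hΩcard
end

section
/- Let p be a prime, d ≥ 2, n ≥ 1, and let H be a finite-index additive subgroup of ℤ_p^d such that the quotient group ℤ_p^d/H is cyclic of order p^{n−1}. Then there exist two distinct additive subgroups H₁ ≠ H₂ of ℤ_p^d, both contained in H with [H : Hᵢ] = p, such that both quotients ℤ_p^d/H₁ and ℤ_p^d/H₂ are cyclic (of order p^n), and for every additive subgroup K of ℤ_p^d one has H₁ ⊊ K if and only if H₂ ⊊ K (i.e., the sets of subgroups strictly containing H₁ and strictly containing H₂ coincide). -/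
/-!
Write `H` as the kernel of a surjection `A : ℤ_p^d → ℤ/p^k`. Every such `A` is `x ↦ c ⬝ᵥ x mod p^k`
for a vector `c` over `ℤ_p` with a unit entry `c i`. Reading the same form modulo `p^(k+1)`, and
likewise the form of `c + p^k eⱼ` for some `j ≠ i`, gives two surjections onto `ℤ/p^(k+1)` that lift
`A` and have different kernels `H₁`, `H₂`. Every nonzero subgroup of `ℤ/p^(k+1)` contains
`p^k ℤ/p^(k+1)`, so for any surjective lift `ψ` of `A` the subgroups strictly containing `ker ψ` are
exactly the subgroups containing `ker A = H`.
-/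

open PadicInt

namespace LinkedCovers

section Quotient

variable {G : Type*} [AddCommGroup G]

lemma index_ker_of_surjective {n : ℕ} {f : G →+ ZMod n} (hf : Function.Surjective f) :
    f.ker.index = n := by
  rw [AddSubgroup.index_ker, AddMonoidHom.range_eq_top.mpr hf, AddSubgroup.card_top, Nat.card_zmod]

lemma isAddCyclic_quotient_ker {n : ℕ} {f : G →+ ZMod n} (hf : Function.Surjective f) :
    IsAddCyclic (G ⧸ f.ker) :=
  isAddCyclic_of_surjective _ (QuotientAddGroup.quotientKerEquivOfSurjective f hf).symm.surjective

lemma exists_surjective_ker_eq {n : ℕ} (H : AddSubgroup G) (hcyc : IsAddCyclic (G ⧸ H))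
    (hcard : Nat.card (G ⧸ H) = n) : ∃ f : G →+ ZMod n, Function.Surjective f ∧ f.ker = H := by
  subst hcard
  let e := (zmodAddCyclicAddEquiv hcyc).symm
  refine ⟨e.toAddMonoidHom.comp (QuotientAddGroup.mk' H),
    e.surjective.comp (QuotientAddGroup.mk'_surjective H), ?_⟩
  rw [AddMonoidHom.ker_comp_of_injective _ _ e.injective, QuotientAddGroup.ker_mk']

end Quotient

variable {p : ℕ}

noncomputable abbrev reduce (k : ℕ) : ZMod (p ^ (k + 1)) →+* ZMod (p ^ k) :=
  ZMod.castHom (pow_dvd_pow p k.le_succ) _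

lemma reduce_pow_self (k : ℕ) : reduce k ((p : ZMod (p ^ (k + 1))) ^ k) = 0 := by
  rw [map_pow, map_natCast, ← Nat.cast_pow, ZMod.natCast_self]

lemma ker_le_ker_of_reduce {G : Type*} [AddCommGroup G] {k : ℕ} {ψ : G →+ ZMod (p ^ (k + 1))}
    {A : G →+ ZMod (p ^ k)} (hψ : ∀ g, reduce k (ψ g) = A g) : ψ.ker ≤ A.ker := fun g hg => by
  rw [AddMonoidHom.mem_ker, ← hψ, AddMonoidHom.mem_ker.mp hg, map_zero]

variable [Fact p.Prime]

lemma cast_prime_pow_ne_zero (k : ℕ) : (p : ZMod (p ^ (k + 1))) ^ k ≠ 0 := by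
  rw [← Nat.cast_pow, Ne, ZMod.natCast_eq_zero_iff,
    Nat.pow_dvd_pow_iff_le_right (Fact.out : p.Prime).one_lt]
  omega

lemma exists_pow_mul_of_reduce_eq_zero {k : ℕ} {z : ZMod (p ^ (k + 1))} (hz : reduce k z = 0) :
    ∃ w, z = (p : ZMod (p ^ (k + 1))) ^ k * w := by
  rw [← ZMod.natCast_zmod_val z, map_natCast, ZMod.natCast_eq_zero_iff] at hz
  obtain ⟨w, hw⟩ := hz
  exact ⟨w, by rw [← ZMod.natCast_zmod_val z, hw]; push_cast; ring⟩

lemma exists_mul_eq_pow_of_ne_zero {k : ℕ} {t : ZMod (p ^ (k + 1))} (ht : t ≠ 0) :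
    ∃ c, c * t = (p : ZMod (p ^ (k + 1))) ^ k := by
  have hp : p.Prime := Fact.out
  have hval : t.val ≠ 0 := (ZMod.val_ne_zero t).mpr ht
  obtain ⟨s, u, hpu, hsu⟩ := Nat.exists_eq_pow_mul_and_not_dvd hval p hp.ne_one
  have hsk : s ≤ k := by
    by_contra! hks
    exact hval (Nat.eq_zero_of_dvd_of_lt ((pow_dvd_pow p hks).trans (hsu ▸ dvd_mul_right _ _))
      (ZMod.val_lt t))
  obtain ⟨v, hv⟩ : IsUnit (u : ZMod (p ^ (k + 1))) :=
    (ZMod.isUnit_iff_coprime u _).mpr ((hp.coprime_iff_not_dvd.mpr hpu).symm.pow_right _)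
  refine ⟨(p : ZMod (p ^ (k + 1))) ^ (k - s) * ↑v⁻¹, ?_⟩
  rw [← ZMod.natCast_zmod_val t, hsu, Nat.cast_mul, Nat.cast_pow, ← hv]
  calc (p : ZMod (p ^ (k + 1))) ^ (k - s) * ↑v⁻¹ * ((p : ZMod (p ^ (k + 1))) ^ s * v)
      = (p : ZMod (p ^ (k + 1))) ^ (k - s + s) * ↑(v⁻¹ * v) := by push_cast; ring
    _ = (p : ZMod (p ^ (k + 1))) ^ k := by
      rw [Nat.sub_add_cancel hsk, inv_mul_cancel, Units.val_one, mul_one]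

section Lift

variable {G : Type*} [AddCommGroup G] {k : ℕ} {ψ : G →+ ZMod (p ^ (k + 1))} {A : G →+ ZMod (p ^ k)}

lemma ker_lt_iff_ker_le_of_reduce (hψ : ∀ g, reduce k (ψ g) = A g)
    (hsurj : Function.Surjective ψ) (K : AddSubgroup G) : ψ.ker < K ↔ A.ker ≤ K := by
  constructor
  · intro hK h hh
    obtain ⟨x, hxK, hx⟩ := SetLike.exists_of_lt hK
    obtain ⟨c, hc⟩ := exists_mul_eq_pow_of_ne_zero (mt AddMonoidHom.mem_ker.mpr hx)
    obtain ⟨w, hw⟩ := exists_pow_mul_of_reduce_eq_zero ((hψ h).trans hh)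
    have hmem : h - (w * c).val • x ∈ ψ.ker := by
      rw [AddMonoidHom.mem_ker, map_sub, map_nsmul, nsmul_eq_mul, ZMod.natCast_zmod_val, hw,
        mul_assoc, hc, mul_comm, sub_self]
    simpa using K.add_mem (hK.le hmem) (K.nsmul_mem hxK (w * c).val)
  · intro hK
    obtain ⟨x, hx⟩ := hsurj ((p : ZMod (p ^ (k + 1))) ^ k)
    have hxA : x ∈ A.ker := by rw [AddMonoidHom.mem_ker, ← hψ, hx, reduce_pow_self]
    refine lt_of_le_of_ne ((ker_le_ker_of_reduce hψ).trans hK) fun h => ?_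
    exact cast_prime_pow_ne_zero k (hx ▸ AddMonoidHom.mem_ker.mp (h ▸ hK hxA))

lemma relIndex_ker_of_reduce (hψ : ∀ g, reduce k (ψ g) = A g) (hsurj : Function.Surjective ψ) :
    ψ.ker.relIndex A.ker = p := by
  have hA : Function.Surjective A := fun z => by
    obtain ⟨y, rfl⟩ := ZMod.castHom_surjective (pow_dvd_pow p k.le_succ) z
    obtain ⟨g, rfl⟩ := hsurj y
    exact ⟨g, (hψ g).symm⟩
  have h := AddSubgroup.relIndex_mul_index (ker_le_ker_of_reduce hψ)
  rw [index_ker_of_surjective hsurj, index_ker_of_surjective hA] at h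
  exact Nat.eq_of_mul_eq_mul_right (pow_pos (Fact.out : p.Prime).pos k) (h.trans (pow_succ' p k))

end Lift

section Padic

lemma addMonoidHom_padicInt_apply {m : ℕ} (f : ℤ_[p] →+ ZMod (p ^ m)) (t : ℤ_[p]) :
    f t = toZModPow m t * f 1 := by
  set r := (toZModPow m t).val
  obtain ⟨u, hu⟩ : (p : ℤ_[p]) ^ m ∣ t - r := by
    rw [← Ideal.mem_span_singleton, ← ker_toZModPow, RingHom.mem_ker, map_sub, map_natCast,
      ZMod.natCast_zmod_val, sub_self]
  have ht : t = r • (1 : ℤ_[p]) + (p ^ m) • u := by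
    rw [nsmul_eq_mul, nsmul_eq_mul, mul_one, Nat.cast_pow, ← hu, add_sub_cancel]
  conv_lhs => rw [ht]
  rw [map_add, map_nsmul, map_nsmul, nsmul_eq_mul, nsmul_eq_mul, ZMod.natCast_self, zero_mul,
    add_zero, ZMod.natCast_zmod_val]

variable {ι : Type*} [Fintype ι]

noncomputable def dotProductMod (m : ℕ) (c : ι → ℤ_[p]) : (ι → ℤ_[p]) →+ ZMod (p ^ m) where
  toFun x := toZModPow m (c ⬝ᵥ x)
  map_zero' := by rw [dotProduct_zero, map_zero]
  map_add' x y := by rw [dotProduct_add, map_add]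

lemma dotProductMod_apply (m : ℕ) (c x : ι → ℤ_[p]) :
    dotProductMod m c x = toZModPow m (c ⬝ᵥ x) := rfl

lemma reduce_dotProductMod {k : ℕ} (c x : ι → ℤ_[p]) :
    reduce k (dotProductMod (k + 1) c x) = dotProductMod k c x := by
  rw [dotProductMod_apply, dotProductMod_apply, ZMod.castHom_apply,
    cast_toZModPow k (k + 1) k.le_succ]

variable [DecidableEq ι]

lemma eq_dotProductMod {m : ℕ} (f : (ι → ℤ_[p]) →+ ZMod (p ^ m)) :
    f = dotProductMod m (fun i => ((f (Pi.single i 1)).val : ℤ_[p])) := by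
  ext i t
  simp only [AddMonoidHom.comp_apply, AddMonoidHom.single_apply]
  rw [dotProductMod_apply, dotProduct_single, map_mul, map_natCast, ZMod.natCast_zmod_val,
    mul_comm]
  exact addMonoidHom_padicInt_apply (f.comp (AddMonoidHom.single (fun _ => ℤ_[p]) i)) t

lemma dotProductMod_surjective {m : ℕ} {c : ι → ℤ_[p]} {i : ι} (hc : IsUnit (c i)) :
    Function.Surjective (dotProductMod m c) := fun z => by
  obtain ⟨u, hu⟩ := hc
  refine ⟨Pi.single i (↑u⁻¹ * (z.val : ℤ_[p])), ?_⟩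
  rw [dotProductMod_apply, dotProduct_single, ← hu, ← mul_assoc, Units.mul_inv, one_mul,
    map_natCast, ZMod.natCast_zmod_val]

lemma dotProductMod_add_single_pow (k : ℕ) (c : ι → ℤ_[p]) (j : ι) :
    dotProductMod k (c + Pi.single j ((p : ℤ_[p]) ^ k)) = dotProductMod k c := by
  refine DFunLike.ext _ _ fun x => ?_
  rw [dotProductMod_apply, dotProductMod_apply, add_dotProduct, single_dotProduct, map_add,
    map_mul, map_pow, map_natCast, ← Nat.cast_pow, ZMod.natCast_self, zero_mul, add_zero]

lemma exists_eq_dotProductMod_isUnit [Nonempty ι] {m : ℕ} (f : (ι → ℤ_[p]) →+ ZMod (p ^ m))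
    (hf : Function.Surjective f) : ∃ c, f = dotProductMod m c ∧ ∃ i, IsUnit (c i) := by
  rcases m with _ | k
  · have : Subsingleton (ZMod (p ^ 0)) := by rw [pow_zero]; infer_instance
    exact ⟨1, DFunLike.ext _ _ fun _ => Subsingleton.elim _ _, Classical.arbitrary ι, isUnit_one⟩
  refine ⟨_, eq_dotProductMod f, ?_⟩
  by_contra! hc
  -- otherwise every value of `f` is a multiple of `p`, which is not a unit in `ZMod (p ^ (k + 1))`
  obtain ⟨x, hx⟩ := hf 1
  obtain ⟨r, hr⟩ : (p : ℤ_[p]) ∣ _ ⬝ᵥ x := Finset.dvd_sum fun i _ =>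
    dvd_mul_of_dvd_left ((norm_lt_one_iff_dvd _).mp (mem_nonunits.mp (hc i))) _
  rw [eq_dotProductMod f, dotProductMod_apply, hr, map_mul, map_natCast] at hx
  exact (ZMod.isUnit_prime_iff_not_dvd Fact.out).mp (IsUnit.of_mul_eq_one _ hx)
    (dvd_pow_self p k.succ_ne_zero)

lemma ker_dotProductMod_ne_ker_dotProductMod_add_single {k : ℕ} {c : ι → ℤ_[p]} {i j : ι}
    (hc : IsUnit (c i)) (hji : j ≠ i) :
    (dotProductMod (k + 1) c).ker ≠
      (dotProductMod (k + 1) (c + Pi.single j ((p : ℤ_[p]) ^ k))).ker := by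
  obtain ⟨u, hu⟩ := hc
  set x : ι → ℤ_[p] := Pi.single j 1 - Pi.single i (↑u⁻¹ * c j) with hx_def
  have hx : c ⬝ᵥ x = 0 := by
    rw [dotProduct_sub, dotProduct_single, dotProduct_single, ← hu, ← mul_assoc, Units.mul_inv,
      mul_one, one_mul, sub_self]
  have hxj : x j = 1 := by
    rw [hx_def, Pi.sub_apply, Pi.single_eq_same, Pi.single_eq_of_ne hji, sub_zero]
  have hx' : dotProductMod (k + 1) (c + Pi.single j ((p : ℤ_[p]) ^ k)) x =
      (p : ZMod (p ^ (k + 1))) ^ k := by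
    rw [dotProductMod_apply, add_dotProduct, hx, zero_add, single_dotProduct, hxj, mul_one,
      map_pow, map_natCast]
  intro h
  have hmem : x ∈ (dotProductMod (k + 1) c).ker := by
    rw [AddMonoidHom.mem_ker, dotProductMod_apply, hx, map_zero]
  exact cast_prime_pow_ne_zero k (hx' ▸ AddMonoidHom.mem_ker.mp (h ▸ hmem))

end Padic

end LinkedCovers

open LinkedCovers

theorem exists_linked_cyclic_covers_general
    (p : ℕ) [Fact p.Prime] (d n : ℕ) (hd : 2 ≤ d) (hn : 1 ≤ n)
    (H : AddSubgroup (Fin d → ℤ_[p]))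
    (hcyc : IsAddCyclic ((Fin d → ℤ_[p]) ⧸ H))
    (hcard : Nat.card ((Fin d → ℤ_[p]) ⧸ H) = p ^ (n - 1)) :
    ∃ H₁ H₂ : AddSubgroup (Fin d → ℤ_[p]), H₁ ≠ H₂ ∧ H₁ ≤ H ∧ H₂ ≤ H ∧
      (H₁.addSubgroupOf H).index = p ∧ (H₂.addSubgroupOf H).index = p ∧
      IsAddCyclic ((Fin d → ℤ_[p]) ⧸ H₁) ∧ IsAddCyclic ((Fin d → ℤ_[p]) ⧸ H₂) ∧
      Nat.card ((Fin d → ℤ_[p]) ⧸ H₁) = p ^ n ∧ Nat.card ((Fin d → ℤ_[p]) ⧸ H₂) = p ^ n ∧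
      ∀ K : AddSubgroup (Fin d → ℤ_[p]), H₁ < K ↔ H₂ < K := by
  obtain ⟨k, rfl⟩ : ∃ k, n = k + 1 := ⟨n - 1, by omega⟩
  rw [Nat.add_sub_cancel] at hcard
  obtain ⟨A, hA, rfl⟩ := exists_surjective_ker_eq H hcyc hcard
  have : Nontrivial (Fin d) := Fin.nontrivial_iff_two_le.mpr hd
  obtain ⟨c, rfl, i, hci⟩ := exists_eq_dotProductMod_isUnit A hA
  obtain ⟨j, hji⟩ := exists_ne i
  have hci' : IsUnit ((c + Pi.single j ((p : ℤ_[p]) ^ k) : Fin d → ℤ_[p]) i) := by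
    rwa [Pi.add_apply, Pi.single_eq_of_ne hji.symm, add_zero]
  have hlift : ∀ x, reduce k (dotProductMod (k + 1) c x) = dotProductMod k c x :=
    reduce_dotProductMod c
  have hlift' : ∀ x, reduce k (dotProductMod (k + 1) (c + Pi.single j ((p : ℤ_[p]) ^ k)) x) =
      dotProductMod k c x := fun x => by
    rw [reduce_dotProductMod, dotProductMod_add_single_pow]
  have hsurj := dotProductMod_surjective (m := k + 1) hci
  have hsurj' := dotProductMod_surjective (m := k + 1) hci'
  refine ⟨_, _, ker_dotProductMod_ne_ker_dotProductMod_add_single hci hji,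
    ker_le_ker_of_reduce hlift, ker_le_ker_of_reduce hlift', relIndex_ker_of_reduce hlift hsurj,
    relIndex_ker_of_reduce hlift' hsurj', isAddCyclic_quotient_ker hsurj,
    isAddCyclic_quotient_ker hsurj', index_ker_of_surjective hsurj,
    index_ker_of_surjective hsurj', fun K => ?_⟩
  rw [ker_lt_iff_ker_le_of_reduce hlift hsurj, ker_lt_iff_ker_le_of_reduce hlift' hsurj']

/-- Let p be a prime, d ≥ 2, n ≥ 1, and H a finite-index additive subgroup of ℤ_p^d
whose quotient is cyclic of order p^(n-1). Then there are two distinct index-p subgroups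
H₁ ≠ H₂ of H with cyclic quotients ℤ_p^d/Hᵢ of order p^n, such that the sets of
subgroups strictly containing H₁ and strictly containing H₂ coincide. -/
theorem exists_linked_cyclic_covers
    (p : ℕ) [Fact p.Prime] (d n : ℕ) (hd : 2 ≤ d) (hn : 1 ≤ n)
    (H : AddSubgroup (Fin d → ℤ_[p])) (hH : H.index ≠ 0)
    (hcyc : IsAddCyclic ((Fin d → ℤ_[p]) ⧸ H))
    (hcard : Nat.card ((Fin d → ℤ_[p]) ⧸ H) = p ^ (n - 1)) :
    ∃ H₁ H₂ : AddSubgroup (Fin d → ℤ_[p]), H₁ ≠ H₂ ∧ H₁ ≤ H ∧ H₂ ≤ H ∧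
      (H₁.addSubgroupOf H).index = p ∧ (H₂.addSubgroupOf H).index = p ∧
      IsAddCyclic ((Fin d → ℤ_[p]) ⧸ H₁) ∧ IsAddCyclic ((Fin d → ℤ_[p]) ⧸ H₂) ∧
      Nat.card ((Fin d → ℤ_[p]) ⧸ H₁) = p ^ n ∧ Nat.card ((Fin d → ℤ_[p]) ⧸ H₂) = p ^ n ∧
      ∀ K : AddSubgroup (Fin d → ℤ_[p]), H₁ < K ↔ H₂ < K :=
  exists_linked_cyclic_covers_general p d n hd hn H hcyc hcard
end

section
/- Let p be a prime, d ≥ 2, and let H be a finite-index additive subgroup of ℤ_p^d of level n, i.e. H ⊆ p^n·ℤ_p^d and H ⊄ p^{n+1}·ℤ_p^d. Then there exist two distinct additive subgroups K₁ ≠ K₂ contained in H with [H : Kᵢ] = p such that each Kᵢ also has level n (i.e. Kᵢ ⊆ p^n·ℤ_p^d and Kᵢ ⊄ p^{n+1}·ℤ_p^d). -/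
/-!
A finite-index subgroup `H` of `ℤ_p^d` contains `p^k ℤ_p^d` for some `k`, so it is a
`ℤ_p`-submodule, free of rank `d ≥ 2`. Reducing two coordinates modulo `p` maps `H` onto
`(ℤ/p)²`, and the kernels of `x`, `y` and `x + y` are three distinct subgroups of index `p`
in `H`. Subgroups of prime index are maximal, so at most one of them lies in the proper
subgroup `H ∩ p^(n+1) ℤ_p^d`; the other two have level `n`.
-/

namespace AddSubgroup

variable {G : Type*} [AddGroup G]

theorem eq_of_le_of_index_prime {K M : AddSubgroup G} (hKM : K ≤ M) (hM : M ≠ ⊤)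
    (hK : K.index.Prime) : K = M := by
  have hMK : M.index = K.index :=
    (hK.eq_one_or_self_of_dvd _ (index_dvd_of_le hKM)).resolve_left
      fun h => hM (index_eq_one.mp h)
  have hrel : K.relIndex M = 1 := by
    have := relIndex_mul_index hKM
    rwa [hMK, Nat.mul_eq_right hK.ne_zero] at this
  exact le_antisymm hKM (relIndex_eq_one.mp hrel)

theorem index_ker_of_surjective {A : Type*} [AddGroup A] {f : G →+ A}
    (hf : Function.Surjective f) : f.ker.index = Nat.card A := by
  rw [← AddMonoidHom.comap_bot, index_comap_of_surjective ⊥ hf, index_bot]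

theorem exists_three_ne_index_eq_of_surjective {p : ℕ} [Fact (1 < p)] {f : G →+ ZMod p × ZMod p}
    (hf : Function.Surjective f) :
    ∃ L₁ L₂ L₃ : AddSubgroup G, L₁ ≠ L₂ ∧ L₁ ≠ L₃ ∧ L₂ ≠ L₃ ∧
      L₁.index = p ∧ L₂.index = p ∧ L₃.index = p := by
  have hindex : ∀ g : ZMod p × ZMod p →+ ZMod p, Function.Surjective g → (g.comp f).ker.index = p :=
    fun g hg => by
      rw [index_ker_of_surjective (f := g.comp f) (hg.comp hf), Nat.card_zmod]
  let fst := AddMonoidHom.fst (ZMod p) (ZMod p)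
  let snd := AddMonoidHom.snd (ZMod p) (ZMod p)
  obtain ⟨x, hx⟩ := hf (1, 0)
  obtain ⟨y, hy⟩ := hf (0, 1)
  refine ⟨(fst.comp f).ker, (snd.comp f).ker, ((fst + snd).comp f).ker, ?_, ?_, ?_,
    hindex fst Prod.fst_surjective, hindex snd Prod.snd_surjective,
    hindex _ fun a => ⟨(a, 0), add_zero a⟩⟩
  all_goals
    intro h
    have hxh := SetLike.ext_iff.mp h x
    have hyh := SetLike.ext_iff.mp h y
    simp [fst, snd, hx, hy] at hxh hyh

theorem exists_ne_index_eq_not_le {q : ℕ} (hq : q.Prime) {M : AddSubgroup G} (hM : M ≠ ⊤)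
    {L₁ L₂ L₃ : AddSubgroup G} (h₁₂ : L₁ ≠ L₂) (h₁₃ : L₁ ≠ L₃) (h₂₃ : L₂ ≠ L₃)
    (hL₁ : L₁.index = q) (hL₂ : L₂.index = q) (hL₃ : L₃.index = q) :
    ∃ K₁ K₂ : AddSubgroup G, K₁ ≠ K₂ ∧ K₁.index = q ∧ K₂.index = q ∧ ¬ K₁ ≤ M ∧ ¬ K₂ ≤ M := by
  have hunique : ∀ {K K' : AddSubgroup G}, K.index = q → K'.index = q → K ≤ M → K' ≤ M →
      K = K' := fun hK hK' hKM hK'M =>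
    (eq_of_le_of_index_prime hKM hM (hK ▸ hq)).trans
      (eq_of_le_of_index_prime hK'M hM (hK' ▸ hq)).symm
  by_cases hL₁M : L₁ ≤ M
  · exact ⟨L₂, L₃, h₂₃, hL₂, hL₃, fun h => h₁₂ (hunique hL₁ hL₂ hL₁M h),
      fun h => h₁₃ (hunique hL₁ hL₃ hL₁M h)⟩
  by_cases hL₂M : L₂ ≤ M
  · exact ⟨L₁, L₃, h₁₃, hL₁, hL₃, hL₁M, fun h => h₂₃ (hunique hL₂ hL₃ hL₂M h)⟩
  · exact ⟨L₁, L₂, h₁₂, hL₁, hL₂, hL₁M, hL₂M⟩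

end AddSubgroup

theorem Module.Basis.coord_prod_coord_surjective {ι R M : Type*} [Semiring R] [AddCommMonoid M]
    [Module R M] (b : Module.Basis ι R M) {i j : ι} (hij : i ≠ j) :
    Function.Surjective ((b.coord i).prod (b.coord j)) := by
  rintro ⟨a, c⟩
  refine ⟨a • b i + c • b j, ?_⟩
  simp [hij, hij.symm]

theorem Submodule.finrank_le_finrank_of_smul_mem {R M : Type*} [CommRing R] [IsDomain R]
    [AddCommGroup M] [Module R M] [Module.Free R M] [Module.Finite R M] (H : Submodule R M)
    [Module.Finite R H] {a : R} (ha : a ≠ 0) (hH : ∀ x : M, a • x ∈ H) :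
    Module.finrank R M ≤ Module.finrank R H := by
  let b := Module.finBasis R M
  have hli : LinearIndependent R fun i => (⟨a • b i, hH _⟩ : H) := by
    refine LinearIndependent.of_comp H.subtype ?_
    have hinj : Function.Injective (a • LinearMap.id : M →ₗ[R] M) := smul_right_injective M ha
    exact b.linearIndependent.map_injOn _ hinj.injOn
  simpa using hli.fintype_card_le_finrank

namespace PadicInt

variable {p : ℕ} [Fact p.Prime] {M : Type*} [AddCommGroup M] [Module ℤ_[p] M]

theorem exists_pow_smul_mem_of_index_ne_zero {H : AddSubgroup M} (hH : H.index ≠ 0) :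
    ∃ k : ℕ, ∀ x : M, (p : ℤ_[p]) ^ k • x ∈ H := by
  obtain ⟨k, u, hN⟩ : ∃ (k : ℕ) (u : ℤ_[p]ˣ), (H.index : ℤ_[p]) = u * p ^ k :=
    ⟨_, _, unitCoeff_spec (Nat.cast_ne_zero.mpr hH)⟩
  refine ⟨k, fun x => ?_⟩
  have hx : (p : ℤ_[p]) ^ k • x = H.index • ((↑u⁻¹ : ℤ_[p]) • x) := by
    rw [← Nat.cast_smul_eq_nsmul ℤ_[p], smul_smul, hN, mul_comm (u : ℤ_[p]), mul_assoc,
      Units.mul_inv, mul_one]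
  exact hx ▸ H.nsmul_index_mem _

theorem smul_mem_of_forall_pow_smul_mem {H : AddSubgroup M} {k : ℕ}
    (hk : ∀ x : M, (p : ℤ_[p]) ^ k • x ∈ H) (c : ℤ_[p]) {x : M} (hx : x ∈ H) : c • x ∈ H := by
  obtain ⟨t, ht⟩ := Ideal.mem_span_singleton'.mp (appr_spec k c)
  have hc : c • x = c.appr k • x + (p : ℤ_[p]) ^ k • t • x := by
    rw [smul_smul, mul_comm, ht, ← Nat.cast_smul_eq_nsmul ℤ_[p], ← add_smul, add_sub_cancel]
  rw [hc]
  exact H.add_mem (H.nsmul_mem hx _) (hk _)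

theorem exists_surjective_zmod_prod_of_index_ne_zero [Module.Free ℤ_[p] M]
    [Module.Finite ℤ_[p] M] (hM : 2 ≤ Module.finrank ℤ_[p] M) {H : AddSubgroup M}
    (hH : H.index ≠ 0) :
    ∃ f : H →+ ZMod p × ZMod p, Function.Surjective f := by
  obtain ⟨k, hk⟩ := exists_pow_smul_mem_of_index_ne_zero (p := p) hH
  let H' : Submodule ℤ_[p] M := { H with smul_mem' := smul_mem_of_forall_pow_smul_mem hk }
  have hH' : 2 ≤ Module.finrank ℤ_[p] H' :=
    hM.trans (H'.finrank_le_finrank_of_smul_mem (pow_ne_zero k (NeZero.ne (p : ℤ_[p]))) hk)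
  let b := Module.finBasis ℤ_[p] H'
  have hcoord := b.coord_prod_coord_surjective (i := ⟨0, by omega⟩) (j := ⟨1, by omega⟩)
    (by simp [Fin.ext_iff])
  have htoZMod : Function.Surjective (toZMod : ℤ_[p] →+* ZMod p) := ZMod.ringHom_surjective _
  exact ⟨(toZMod.toAddMonoidHom.prodMap toZMod.toAddMonoidHom).comp
    ((b.coord _).prod (b.coord _)).toAddMonoidHom, (htoZMod.prodMap htoZMod).comp hcoord⟩

end PadicInt

/-- Let p be a prime, d ≥ 2, and H a finite-index additive subgroup of ℤ_p^d of level n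
(i.e. H ⊆ p^n·ℤ_p^d but H ⊄ p^(n+1)·ℤ_p^d). Then there are two distinct index-p
subgroups K₁ ≠ K₂ of H which also have level n. -/
theorem exists_two_index_p_subgroups_same_level
    (p : ℕ) [Fact p.Prime] (d n : ℕ) (hd : 2 ≤ d)
    (H : AddSubgroup (Fin d → ℤ_[p])) (hH : H.index ≠ 0)
    (h1 : H ≤ pPowSubgroup p d n) (h2 : ¬ H ≤ pPowSubgroup p d (n + 1)) :
    ∃ K₁ K₂ : AddSubgroup (Fin d → ℤ_[p]), K₁ ≠ K₂ ∧ K₁ ≤ H ∧ K₂ ≤ H ∧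
      (K₁.addSubgroupOf H).index = p ∧ (K₂.addSubgroupOf H).index = p ∧
      (K₁ ≤ pPowSubgroup p d n ∧ ¬ K₁ ≤ pPowSubgroup p d (n + 1)) ∧
      (K₂ ≤ pPowSubgroup p d n ∧ ¬ K₂ ≤ pPowSubgroup p d (n + 1)) := by
  have hproper : (pPowSubgroup p d (n + 1)).addSubgroupOf H ≠ ⊤ := by
    rwa [Ne, AddSubgroup.addSubgroupOf_eq_top]
  obtain ⟨f, hf⟩ :=
    PadicInt.exists_surjective_zmod_prod_of_index_ne_zero (p := p) (by simpa using hd) hH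
  obtain ⟨L₁, L₂, L₃, h₁₂, h₁₃, h₂₃, hL₁, hL₂, hL₃⟩ :=
    AddSubgroup.exists_three_ne_index_eq_of_surjective hf
  obtain ⟨K₁, K₂, hne, hK₁, hK₂, hK₁M, hK₂M⟩ :=
    AddSubgroup.exists_ne_index_eq_not_le Fact.out hproper h₁₂ h₁₃ h₂₃ hL₁ hL₂ hL₃
  have hof : ∀ K : AddSubgroup H, (K.map H.subtype).addSubgroupOf H = K :=
    AddSubgroup.comap_map_eq_self_of_injective H.subtype_injective
  refine ⟨K₁.map H.subtype, K₂.map H.subtype, AddSubgroup.map_subtype_inj.not.mpr hne,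
    AddSubgroup.map_subtype_le _, AddSubgroup.map_subtype_le _, (hof K₁).symm ▸ hK₁,
    (hof K₂).symm ▸ hK₂, ⟨(AddSubgroup.map_subtype_le _).trans h1, ?_⟩,
    ⟨(AddSubgroup.map_subtype_le _).trans h1, ?_⟩⟩
  · rwa [AddSubgroup.map_le_iff_le_comap]
  · rwa [AddSubgroup.map_le_iff_le_comap]
end

section
/- Let p be a prime, d ≥ 2, and let H be a finite-index additive subgroup of ℤ_p^d with index [ℤ_p^d : H] = p^n. Then for every m ≥ n there exists an additive subgroup K ⊆ H with [ℤ_p^d : K] = p^m such that K and H have the same level. -/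
/-- The level of an additive subgroup H of ℤ_p^d: the largest n with H ⊆ p^n·ℤ_p^d. -/
noncomputable def level (p : ℕ) [Fact p.Prime] (d : ℕ)
    (H : AddSubgroup (Fin d → ℤ_[p])) : ℕ :=
  sSup {n : ℕ | H ≤ pPowSubgroup p d n}

/-!
A subgroup `H` of index `p ^ n` contains `p ^ n • ℤ_p^d`; since every `p`-adic integer is
congruent to an ordinary integer modulo `p ^ n`, `H` is then a `ℤ_p`-submodule. Let `ℓ` be the
level of `H` and pick `x ∈ H` outside `p ^ (ℓ + 1) • ℤ_p^d`. As `ℤ_p` is a valuation ring and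
`d ≥ 2`, some surjective linear form `g` vanishes at `x`. The image `g(H)` is a nonzero ideal
`(p ^ k)`, so `K = H ∩ g⁻¹(p ^ (k + m - n))` has index `p ^ (m - n)` in `H`; it contains `x`,
hence still has level `ℓ`.
-/

section Level

variable {p : ℕ} [Fact p.Prime] {d : ℕ}

theorem mem_pPowSubgroup_iff {t : ℕ} {x : Fin d → ℤ_[p]} :
    x ∈ pPowSubgroup p d t ↔ ∀ i, (p : ℤ_[p]) ^ t ∣ x i := by
  refine ⟨?_, fun h => ?_⟩
  · rintro ⟨z, rfl⟩ i
    exact ⟨z i, rfl⟩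
  · choose z hz using h
    exact ⟨z, funext fun i => (hz i).symm⟩

theorem pPowSubgroup_antitone : Antitone (pPowSubgroup p d) := fun _ _ hab _ hx =>
  mem_pPowSubgroup_iff.mpr fun i => (pow_dvd_pow _ hab).trans (mem_pPowSubgroup_iff.mp hx i)

theorem pPowSubgroup_zero : pPowSubgroup p d 0 = ⊤ :=
  eq_top_iff.mpr fun _ _ => mem_pPowSubgroup_iff.mpr fun _ => by simp

theorem bddAbove_setOf_le_pPowSubgroup {H : AddSubgroup (Fin d → ℤ_[p])} (hH : H ≠ ⊥) :
    BddAbove {t | H ≤ pPowSubgroup p d t} := by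
  obtain ⟨y, hyH, hy⟩ := (H.bot_or_exists_ne_zero).resolve_left hH
  obtain ⟨i, hi⟩ := Function.ne_iff.mp hy
  refine ⟨(y i).valuation, fun t ht => ?_⟩
  rw [← PadicInt.mem_span_pow_iff_le_valuation _ hi, Ideal.mem_span_singleton]
  exact mem_pPowSubgroup_iff.mp (ht hyH) i

theorem le_pPowSubgroup_level (H : AddSubgroup (Fin d → ℤ_[p])) :
    H ≤ pPowSubgroup p d (level p d H) := by
  have h0 : H ≤ pPowSubgroup p d 0 := pPowSubgroup_zero (p := p) ▸ le_top
  by_cases hbdd : BddAbove {t | H ≤ pPowSubgroup p d t}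
  · exact Nat.sSup_mem ⟨0, h0⟩ hbdd
  · rwa [level, Nat.sSup_of_not_bddAbove hbdd]

theorem not_le_pPowSubgroup_level_succ {H : AddSubgroup (Fin d → ℤ_[p])} (hH : H ≠ ⊥) :
    ¬ H ≤ pPowSubgroup p d (level p d H + 1) := fun h =>
  Nat.not_succ_le_self _ (le_csSup (bddAbove_setOf_le_pPowSubgroup hH) h)

theorem level_eq_of_le_of_mem {H K : AddSubgroup (Fin d → ℤ_[p])} (hKH : K ≤ H)
    {x : Fin d → ℤ_[p]} (hxK : x ∈ K) (hx : x ∉ pPowSubgroup p d (level p d H + 1)) :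
    level p d K = level p d H := by
  have hK : K ≤ pPowSubgroup p d (level p d H) := hKH.trans (le_pPowSubgroup_level H)
  refine le_antisymm (csSup_le ⟨_, hK⟩ fun t ht => ?_) ?_
  · by_contra! hlt
    exact hx (pPowSubgroup_antitone hlt (ht hxK))
  · refine le_csSup (bddAbove_setOf_le_pPowSubgroup ?_) hK
    rintro rfl
    exact hx (by rw [(AddSubgroup.mem_bot).mp hxK]; exact zero_mem _)

end Level

section Padic

variable {p : ℕ} [Fact p.Prime]

theorem PadicInt.index_span_pow (a : ℕ) :
    (Ideal.span {(p : ℤ_[p]) ^ a}).toAddSubgroup.index = p ^ a := by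
  have hker : (Ideal.span {(p : ℤ_[p]) ^ a}).toAddSubgroup =
      (⊥ : AddSubgroup (ZMod (p ^ a))).comap (toZModPow a : ℤ_[p] →+* ZMod (p ^ a)) := by
    ext x
    rw [← ker_toZModPow]
    simp
  rw [hker, AddSubgroup.index_comap_of_surjective _ (ZMod.ringHom_surjective _),
    AddSubgroup.index_bot, Nat.card_zmod]

theorem PadicInt.relIndex_span_pow {a b : ℕ} (h : a ≤ b) :
    (Ideal.span {(p : ℤ_[p]) ^ b}).toAddSubgroup.relIndex
      (Ideal.span {(p : ℤ_[p]) ^ a}).toAddSubgroup = p ^ (b - a) := by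
  obtain ⟨c, rfl⟩ := Nat.exists_eq_add_of_le h
  have := AddSubgroup.relIndex_mul_index <| Submodule.toAddSubgroup_mono <|
    Ideal.span_singleton_le_span_singleton.mpr (pow_dvd_pow (p : ℤ_[p]) h)
  rw [index_span_pow, index_span_pow, Nat.pow_add, mul_comm (p ^ a)] at this
  rw [Nat.add_sub_cancel_left]
  exact Nat.eq_of_mul_eq_mul_right (pow_pos (Fact.out : p.Prime).pos a) this

variable {M : Type*} [AddCommGroup M] [Module ℤ_[p] M] {H : AddSubgroup M} {n : ℕ}

theorem AddSubgroup.pow_smul_mem_of_index_eq_pow (hH : H.index = p ^ n) (z : M) :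
    (p : ℤ_[p]) ^ n • z ∈ H := by
  have := H.nsmul_index_mem z
  rwa [hH, ← Nat.cast_smul_eq_nsmul ℤ_[p], Nat.cast_pow] at this

theorem AddSubgroup.smul_mem_of_index_eq_pow (hH : H.index = p ^ n) (a : ℤ_[p]) {y : M}
    (hy : y ∈ H) : a • y ∈ H := by
  obtain ⟨b, hb⟩ := Ideal.mem_span_singleton'.mp (PadicInt.appr_spec n a)
  have ha : a = (a.appr n : ℤ_[p]) + b * (p : ℤ_[p]) ^ n := by rw [hb]; ring
  rw [ha, add_smul, Nat.cast_smul_eq_nsmul, mul_comm, mul_smul]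
  exact H.add_mem (H.nsmul_mem hy _) (H.pow_smul_mem_of_index_eq_pow hH _)

def AddSubgroup.toPadicSubmodule (H : AddSubgroup M) (hH : H.index = p ^ n) :
    Submodule ℤ_[p] M where
  toAddSubmonoid := H.toAddSubmonoid
  smul_mem' a _ hy := H.smul_mem_of_index_eq_pow hH a hy

theorem AddSubgroup.exists_le_index_eq_pow_inf_ker_le (hH : H.index = p ^ n)
    {g : M →ₗ[ℤ_[p]] ℤ_[p]} (hg : Function.Surjective g) {m : ℕ} (hm : n ≤ m) :
    ∃ K : AddSubgroup M, K ≤ H ∧ K.index = p ^ m ∧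
      H ⊓ (LinearMap.ker g).toAddSubgroup ≤ K := by
  set J : Ideal ℤ_[p] := (H.toPadicSubmodule hH).map g
  have hJ : J ≠ ⊥ := by
    obtain ⟨w, hw⟩ := hg 1
    refine (Submodule.ne_bot_iff J).mpr ⟨(p : ℤ_[p]) ^ n,
      ⟨_, H.pow_smul_mem_of_index_eq_pow hH w, by simp [hw]⟩,
      pow_ne_zero n PadicInt.prime_p.ne_zero⟩
  obtain ⟨k, hk⟩ := PadicInt.ideal_eq_span_pow_p hJ
  set T : Ideal ℤ_[p] := Ideal.span {(p : ℤ_[p]) ^ (k + (m - n))}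
  refine ⟨H ⊓ T.toAddSubgroup.comap (g : M →+ ℤ_[p]), inf_le_left, ?_, ?_⟩
  · have hrel : (H ⊓ T.toAddSubgroup.comap (g : M →+ ℤ_[p])).relIndex H = p ^ (m - n) := by
      rw [AddSubgroup.inf_relIndex_left, AddSubgroup.relIndex_comap]
      change T.toAddSubgroup.relIndex J.toAddSubgroup = _
      rw [hk, PadicInt.relIndex_span_pow (Nat.le_add_right _ _), Nat.add_sub_cancel_left]
    rw [← AddSubgroup.relIndex_mul_index inf_le_left, hrel, hH, ← pow_add, Nat.sub_add_cancel hm]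
  · rintro x ⟨hxH, hx⟩
    exact ⟨hxH, show g x ∈ T by rw [LinearMap.mem_ker.mp hx]; exact T.zero_mem⟩

end Padic

section LinearFunctional

variable {R ι : Type*} [CommRing R]

theorem exists_surjective_linearMap_apply_eq_zero_of_dvd [DecidableEq ι] {i j : ι} (hij : i ≠ j)
    {x : ι → R} (hx : x i ∣ x j) :
    ∃ g : (ι → R) →ₗ[R] R, Function.Surjective g ∧ g x = 0 := by
  obtain ⟨c, hc⟩ := hx
  refine ⟨LinearMap.proj j - c • LinearMap.proj i, fun r => ⟨Pi.single j r, ?_⟩, ?_⟩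
  · simp [Pi.single_eq_of_ne hij]
  · simp [hc, mul_comm]

theorem ValuationRing.exists_surjective_linearMap_apply_eq_zero [PreValuationRing R]
    [Nontrivial ι] (x : ι → R) :
    ∃ g : (ι → R) →ₗ[R] R, Function.Surjective g ∧ g x = 0 := by
  classical
  obtain ⟨i, j, hij⟩ := exists_pair_ne ι
  rcases ValuationRing.dvd_total (x i) (x j) with h | h
  · exact exists_surjective_linearMap_apply_eq_zero_of_dvd hij h
  · exact exists_surjective_linearMap_apply_eq_zero_of_dvd hij.symm h

end LinearFunctional

/-- Let p be a prime, d ≥ 2, and H a finite-index additive subgroup of ℤ_p^d of index p^n.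
Then for every m ≥ n there is an additive subgroup K ⊆ H of index p^m in ℤ_p^d with the
same level as H. -/
theorem exists_subgroup_of_index_pow_same_level
    (p : ℕ) [Fact p.Prime] (d n : ℕ) (hd : 2 ≤ d)
    (H : AddSubgroup (Fin d → ℤ_[p])) (hH : H.index = p ^ n) :
    ∀ m : ℕ, n ≤ m → ∃ K : AddSubgroup (Fin d → ℤ_[p]),
      K ≤ H ∧ K.index = p ^ m ∧ level p d K = level p d H := by
  intro m hm
  have : Nontrivial (Fin d) := Fin.nontrivial_iff_two_le.mpr hd
  have hH0 : H ≠ ⊥ := by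
    rintro rfl
    rw [AddSubgroup.index_bot, Nat.card_eq_zero_of_infinite] at hH
    exact pow_ne_zero n (Fact.out : p.Prime).ne_zero hH.symm
  obtain ⟨x, hxH, hx⟩ := SetLike.not_le_iff_exists.mp (not_le_pPowSubgroup_level_succ hH0)
  obtain ⟨g, hg, hgx⟩ := ValuationRing.exists_surjective_linearMap_apply_eq_zero x
  obtain ⟨K, hKH, hK, hHK⟩ := H.exists_le_index_eq_pow_inf_ker_le hH hg hm
  exact ⟨K, hKH, hK, level_eq_of_le_of_mem hKH (hHK ⟨hxH, hgx⟩) hx⟩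
end

section
/- Let p be a prime and H a finite-index additive subgroup of ℤ_p^2. Then the quotient group ℤ_p^2/H is cyclic if and only if H ⊄ p·ℤ_p^2 (i.e., if and only if H has level 0). -/
section Aux

variable {p : ℕ} [Fact p.Prime] (H : AddSubgroup (Fin 2 → ℤ_[p]))

/-- For a finite index subgroup `H` and any `c : ℤ_[p]`, the scalar multiple `c • x`
is congruent mod `H` to an integer multiple of `x`. -/
lemma padic_key (hH : H.index ≠ 0) (c : ℤ_[p]) (x : Fin 2 → ℤ_[p]) :
    ∃ a : ℤ, c • x - ((a : ℤ_[p])) • x ∈ H := by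
  set n := H.index with hn
  set k := n.factorization p with hk
  set m := n / p ^ k with hm'
  have hp := (Fact.out : p.Prime)
  have hnm : (p : ℕ) ^ k * m = n := Nat.ordProj_mul_ordCompl_eq_self n p
  have hmd : ¬ p ∣ m := Nat.not_dvd_ordCompl hp hH
  have hm : IsUnit (m : ℤ_[p]) := by
    rw [PadicInt.isUnit_iff]
    refine le_antisymm (PadicInt.norm_le_one _) ?_
    by_contra hlt
    push_neg at hlt
    have h2 : ‖((m : ℤ) : ℤ_[p])‖ < 1 := by push_cast; exact hlt
    have := (PadicInt.norm_int_lt_one_iff_dvd (m : ℤ)).mp h2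
    exact hmd (by exact_mod_cast this)
  have hdvd : (n : ℤ_[p]) ∣ (p : ℤ_[p]) ^ k := by
    obtain ⟨u, hu⟩ := hm
    refine ⟨(↑u⁻¹ : ℤ_[p]), ?_⟩
    have hcast : (n : ℤ_[p]) = (p : ℤ_[p]) ^ k * (m : ℤ_[p]) := by
      rw [← hnm]; push_cast; ring
    rw [hcast, ← hu, mul_assoc, Units.mul_inv, mul_one]
  refine ⟨((c.appr k : ℕ) : ℤ), ?_⟩
  have hs := PadicInt.appr_spec k c
  rw [Ideal.mem_span_singleton] at hs
  obtain ⟨d, hd⟩ := hdvd.trans hs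
  have heq : c • x - (((c.appr k : ℕ) : ℤ) : ℤ_[p]) • x = n • (d • x) := by
    rw [← sub_smul]
    have h3 : c - (((c.appr k : ℕ) : ℤ) : ℤ_[p]) = (n : ℤ_[p]) * d := by
      push_cast at hd ⊢; exact hd
    rw [h3, mul_smul, Nat.cast_smul_eq_nsmul]
  rw [heq]
  exact AddSubgroup.nsmul_index_mem H _

lemma padic_smul_mem (hH : H.index ≠ 0) {x : Fin 2 → ℤ_[p]} (hx : x ∈ H) (c : ℤ_[p]) :
    c • x ∈ H := by
  obtain ⟨a, ha⟩ := padic_key H hH c x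
  have h2 : ((a : ℤ_[p])) • x ∈ H := by
    rw [Int.cast_smul_eq_zsmul]; exact AddSubgroup.zsmul_mem H hx a
  simpa using H.add_mem ha h2

end Aux

/-- Let p be a prime and H a finite-index additive subgroup of ℤ_p². Then ℤ_p²/H is
cyclic if and only if H ⊄ p·ℤ_p², i.e. iff H has level 0. -/
theorem quotient_isAddCyclic_iff_level_zero
    (p : ℕ) [Fact p.Prime]
    (H : AddSubgroup (Fin 2 → ℤ_[p])) (hH : H.index ≠ 0) :
    IsAddCyclic ((Fin 2 → ℤ_[p]) ⧸ H) ↔ ¬ H ≤ pPowSubgroup p 2 1 := by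
  have memP : ∀ x : Fin 2 → ℤ_[p],
      x ∈ pPowSubgroup p 2 1 ↔ ∃ y, (p : ℤ_[p]) • y = x := by
    intro x
    simp [pPowSubgroup, AddMonoidHom.mem_range]
  constructor
  · intro hc hle
    haveI := hc
    obtain ⟨g, hg⟩ := IsAddCyclic.exists_generator (α := (Fin 2 → ℤ_[p]) ⧸ H)
    obtain ⟨g₀, rfl⟩ := QuotientAddGroup.mk_surjective g
    set e0 : Fin 2 → ℤ_[p] := Pi.single 0 1 with he0
    set e1 : Fin 2 → ℤ_[p] := Pi.single 1 1 with he1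
    obtain ⟨a, ha⟩ := AddSubgroup.mem_zmultiples_iff.mp (hg (QuotientAddGroup.mk e0))
    obtain ⟨b, hb⟩ := AddSubgroup.mem_zmultiples_iff.mp (hg (QuotientAddGroup.mk e1))
    rw [← QuotientAddGroup.mk_zsmul, QuotientAddGroup.eq_iff_sub_mem] at ha hb
    obtain ⟨y0, hy0⟩ := (memP _).mp (hle ha)
    obtain ⟨y1, hy1⟩ := (memP _).mp (hle hb)
    -- p • (b • y0 - a • y1) = a • e1 - b • e0
    have hz : (p : ℤ_[p]) • (b • y0 - a • y1) = a • e1 - b • e0 := by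
      rw [smul_sub, smul_comm ((p : ℤ_[p])) b, smul_comm ((p : ℤ_[p])) a, hy0, hy1]
      rw [smul_sub, smul_sub, smul_comm b a]
      abel
    have hpa : (p : ℤ_[p]) ∣ (a : ℤ_[p]) := by
      refine ⟨(b • y0 - a • y1) 1, ?_⟩
      have h1 := congrFun hz 1
      have h2 : (a • e1 - b • e0) 1 = (a : ℤ_[p]) := by
        simp [he0, he1, Pi.single_apply]
      rw [h2] at h1
      simpa [smul_eq_mul] using h1.symm
    obtain ⟨z, hzz⟩ := hpa
    have h0 := congrFun hy0 0
    have h0' : (p : ℤ_[p]) * y0 0 = (a : ℤ_[p]) * g₀ 0 - 1 := by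
      have h2 : (a • g₀ - e0) 0 = (a : ℤ_[p]) * g₀ 0 - 1 := by
        simp [he0, Pi.single_apply, zsmul_eq_mul]
      rw [h2] at h0
      simpa [smul_eq_mul] using h0
    have hdvd1 : (p : ℤ_[p]) ∣ 1 := by
      refine ⟨z * g₀ 0 - y0 0, ?_⟩
      rw [mul_sub, ← mul_assoc, ← hzz]
      linear_combination h0'
    have hlt : ‖(1 : ℤ_[p])‖ < 1 := (PadicInt.norm_lt_one_iff_dvd 1).mpr hdvd1
    simp at hlt
  · intro hne
    obtain ⟨h, hhH, hhP⟩ := SetLike.not_le_iff_exists.mp hne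
    have hi : ∃ i, ¬ (p : ℤ_[p]) ∣ h i := by
      by_contra hcon
      push_neg at hcon
      choose y hy using fun i => hcon i
      exact hhP ((memP h).mpr ⟨y, by funext t; simp [smul_eq_mul, (hy t).symm]⟩)
    obtain ⟨i, hi⟩ := hi
    have hu : IsUnit (h i) := by
      rw [PadicInt.isUnit_iff]
      refine le_antisymm (PadicInt.norm_le_one _) ?_
      by_contra hlt
      push_neg at hlt
      exact hi ((PadicInt.norm_lt_one_iff_dvd _).mp hlt)
    obtain ⟨w, hw⟩ := hu.exists_right_inv
    set j : Fin 2 := if i = 0 then 1 else 0 with hj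
    have hij : j ≠ i := by fin_cases i <;> simp [hj]
    have hcover : ∀ t : Fin 2, t = i ∨ t = j := by
      intro t; fin_cases i <;> fin_cases t <;> simp [hj]
    set ej : Fin 2 → ℤ_[p] := Pi.single j 1 with hej
    refine ⟨⟨QuotientAddGroup.mk ej, fun q => ?_⟩⟩
    obtain ⟨v, rfl⟩ := QuotientAddGroup.mk_surjective q
    set c : ℤ_[p] := v j - v i * w * h j with hc
    have hstep : v - c • ej = (v i * w) • h := by
      funext t
      rcases hcover t with rfl | rfl
      · simp only [hej, Pi.sub_apply, Pi.smul_apply, smul_eq_mul,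
          Pi.single_eq_of_ne (Ne.symm hij), mul_zero, sub_zero]
        rw [mul_assoc, mul_comm w, hw, mul_one]
      · simp only [hej, Pi.sub_apply, Pi.smul_apply, smul_eq_mul,
          Pi.single_eq_same, mul_one, hc]
        ring
    obtain ⟨a, ha⟩ := padic_key H hH c ej
    have hv : v - ((a : ℤ_[p])) • ej ∈ H := by
      have hsum := H.add_mem (hstep ▸ padic_smul_mem H hH hhH (v i * w)) ha
      convert hsum using 1
      abel
    have hmk : (QuotientAddGroup.mk v : (Fin 2 → ℤ_[p]) ⧸ H)
        = a • QuotientAddGroup.mk ej := by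
      rw [← QuotientAddGroup.mk_zsmul, QuotientAddGroup.eq_iff_sub_mem]
      have : a • ej = ((a : ℤ_[p])) • ej := (Int.cast_smul_eq_zsmul _ _ _).symm
      rw [this]
      exact hv
    exact AddSubgroup.mem_zmultiples_iff.mpr ⟨a, hmk.symm⟩
end

section
/- Let p be a prime and j ≥ 2 an integer. In ℤ_p² define the ℤ_p-submodules H_j = ℤ_p·(1,0) + ℤ_p·(0,p^j) and H_j′ = ℤ_p·(p,0) + ℤ_p·(1,p^{j−1}). Let r ≥ 2 and s ≥ 1 be integers and b ∈ ℤ_p with p ∣ b, and set H = ℤ_p·(p^r,0) + ℤ_p·(b,p^s). Then H ⊆ H_j if and only if s ≥ j, and H ⊆ H_j′ if and only if s ≥ j; in particular H ⊆ H_j if and only if H ⊆ H_j′. -/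
/-- In ℤ_p², let H_j = ℤ_p·(1,0) + ℤ_p·(0,p^j) and H_j′ = ℤ_p·(p,0) + ℤ_p·(1,p^(j-1))
for j ≥ 2, and let H = ℤ_p·(p^r,0) + ℤ_p·(b,p^s) with r ≥ 2, s ≥ 1 and p ∣ b. Then
H ⊆ H_j iff s ≥ j, H ⊆ H_j′ iff s ≥ j; in particular H ⊆ H_j iff H ⊆ H_j′. -/
theorem mem_linked_stabilizers_iff
    (p : ℕ) [Fact p.Prime] (j : ℕ) (hj : 2 ≤ j)
    (r s : ℕ) (hr : 2 ≤ r) (hs : 1 ≤ s) (b : ℤ_[p]) (hb : (p : ℤ_[p]) ∣ b) :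
    (Submodule.span ℤ_[p] {((p : ℤ_[p]) ^ r, 0), (b, (p : ℤ_[p]) ^ s)} ≤
        Submodule.span ℤ_[p] {((1 : ℤ_[p]), (0 : ℤ_[p])), (0, (p : ℤ_[p]) ^ j)} ↔ j ≤ s) ∧
    (Submodule.span ℤ_[p] {((p : ℤ_[p]) ^ r, 0), (b, (p : ℤ_[p]) ^ s)} ≤
        Submodule.span ℤ_[p] {((p : ℤ_[p]), (0 : ℤ_[p])), (1, (p : ℤ_[p]) ^ (j - 1))} ↔ j ≤ s) ∧
    (Submodule.span ℤ_[p] {((p : ℤ_[p]) ^ r, 0), (b, (p : ℤ_[p]) ^ s)} ≤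
        Submodule.span ℤ_[p] {((1 : ℤ_[p]), (0 : ℤ_[p])), (0, (p : ℤ_[p]) ^ j)} ↔
      Submodule.span ℤ_[p] {((p : ℤ_[p]) ^ r, 0), (b, (p : ℤ_[p]) ^ s)} ≤
        Submodule.span ℤ_[p] {((p : ℤ_[p]), (0 : ℤ_[p])), (1, (p : ℤ_[p]) ^ (j - 1))}) := by
  have hp : Prime (p : ℤ_[p]) := PadicInt.prime_p
  have hp0 : (p : ℤ_[p]) ≠ 0 := hp.ne_zero
  have hpu : ¬ IsUnit (p : ℤ_[p]) := hp.not_unit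
  have key1 : (Submodule.span ℤ_[p] {((p : ℤ_[p]) ^ r, 0), (b, (p : ℤ_[p]) ^ s)} ≤
        Submodule.span ℤ_[p] {((1 : ℤ_[p]), (0 : ℤ_[p])), (0, (p : ℤ_[p]) ^ j)}) ↔ j ≤ s := by
    rw [Submodule.span_le]
    constructor
    · intro h
      have h2 := h (Set.mem_insert_of_mem _ rfl)
      rw [SetLike.mem_coe, Submodule.mem_span_pair] at h2
      obtain ⟨a, c, hac⟩ := h2
      have hy : a • (0:ℤ_[p]) + c • (p:ℤ_[p])^j = (p:ℤ_[p])^s := congrArg Prod.snd hac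
      have hdvd : (p:ℤ_[p])^j ∣ (p:ℤ_[p])^s := ⟨c, by
        simpa [smul_eq_mul, mul_comm] using hy.symm⟩
      exact (pow_dvd_pow_iff hp0 hpu).mp hdvd
    · intro hjs
      rw [Set.insert_subset_iff, Set.singleton_subset_iff]
      constructor
      · rw [SetLike.mem_coe, Submodule.mem_span_pair]
        exact ⟨(p:ℤ_[p])^r, 0, by simp [Prod.ext_iff, smul_eq_mul]⟩
      · rw [SetLike.mem_coe, Submodule.mem_span_pair]
        refine ⟨b, (p:ℤ_[p])^(s-j), ?_⟩
        simp [Prod.ext_iff, smul_eq_mul, ← pow_add, Nat.sub_add_cancel hjs]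
  have key2 : (Submodule.span ℤ_[p] {((p : ℤ_[p]) ^ r, 0), (b, (p : ℤ_[p]) ^ s)} ≤
        Submodule.span ℤ_[p] {((p : ℤ_[p]), (0 : ℤ_[p])), (1, (p : ℤ_[p]) ^ (j - 1))}) ↔ j ≤ s := by
    rw [Submodule.span_le]
    constructor
    · intro h
      have h2 := h (Set.mem_insert_of_mem _ rfl)
      rw [SetLike.mem_coe, Submodule.mem_span_pair] at h2
      obtain ⟨a, c, hac⟩ := h2
      have hx : a • (p:ℤ_[p]) + c • (1:ℤ_[p]) = b := congrArg Prod.fst hac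
      have hy : a • (0:ℤ_[p]) + c • (p:ℤ_[p])^(j-1) = (p:ℤ_[p])^s := congrArg Prod.snd hac
      have hc : (p:ℤ_[p]) ∣ c := by
        have : c = b - a * p := by
          simp only [smul_eq_mul, mul_one] at hx
          linear_combination hx
        rw [this]
        exact dvd_sub hb (Dvd.intro_left a rfl)
      obtain ⟨d, hd⟩ := hc
      have hdvd : (p:ℤ_[p])^j ∣ (p:ℤ_[p])^s := by
        refine ⟨d, ?_⟩
        have hjj : j = 1 + (j - 1) := by omega
        rw [hjj, pow_add, pow_one]
        simp only [smul_eq_mul, mul_zero, zero_add] at hy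
        rw [← hy, hd]
        ring
      exact (pow_dvd_pow_iff hp0 hpu).mp hdvd
    · intro hjs
      rw [Set.insert_subset_iff, Set.singleton_subset_iff]
      constructor
      · rw [SetLike.mem_coe, Submodule.mem_span_pair]
        refine ⟨(p:ℤ_[p])^(r-1), 0, ?_⟩
        simp [Prod.ext_iff, smul_eq_mul, ← pow_succ]
        congr 1
        omega
      · rw [SetLike.mem_coe, Submodule.mem_span_pair]
        have hc : (p:ℤ_[p]) ∣ (p:ℤ_[p])^(s-(j-1)) := dvd_pow_self _ (by omega)
        obtain ⟨a, ha⟩ := dvd_sub hb hc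
        refine ⟨a, (p:ℤ_[p])^(s-(j-1)), ?_⟩
        simp only [Prod.smul_mk, smul_eq_mul, Prod.mk_add_mk, mul_zero, zero_add, mul_one,
          Prod.mk.injEq]
        constructor
        · linear_combination -ha
        · rw [← pow_add]
          congr 1
          omega
  exact ⟨key1, key2, key1.trans key2.symm⟩
end

section
/- Let k be a field and let r < n be natural numbers. Suppose φ : k^r → k^n is a map each of whose n coordinate functions is given by evaluating a polynomial in r variables over k. Then φ is not surjective. -/
open MvPolynomial

/-- Numeric key inequality for the counting argument. -/
private lemma key_ineq (r n D : ℕ) (hrn : r < n) :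
    (n * (n * D + 1) ^ r * D + 1) ^ r < ((n * D + 1) ^ r + 1) ^ n := by
  set c := n * D + 1 with hc
  set t := c ^ r with htdef
  have hc1 : 1 ≤ c := Nat.le_add_left 1 _
  have ht1 : 1 ≤ t := Nat.one_le_pow _ _ hc1
  have h1 : n * t * D + 1 ≤ t * c := by
    have e1 : n * t * D = t * (n * D) := by ring
    have e2 : t * c = t * (n * D) + t := by rw [hc]; ring
    omega
  calc (n * t * D + 1) ^ r ≤ (t * c) ^ r := Nat.pow_le_pow_left h1 r
    _ = c ^ ((r + 1) * r) := by
        rw [htdef, ← pow_succ, ← pow_mul]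
    _ ≤ c ^ (n * r) := Nat.pow_le_pow_right hc1 (Nat.mul_le_mul_right r hrn)
    _ = (c ^ r) ^ n := by rw [← pow_mul, mul_comm]
    _ < (t + 1) ^ n := Nat.pow_lt_pow_left (Nat.lt_succ_self t) (by omega)

/-- Any `n > r` polynomials in `r` variables over a field are algebraically dependent. -/
private lemma not_algebraicIndependent {k : Type*} [Field k] (r n : ℕ) (hrn : r < n)
    (P : Fin n → MvPolynomial (Fin r) k) : ¬ AlgebraicIndependent k P := by
  intro hind
  have hinj : Function.Injective (aeval P : MvPolynomial (Fin n) k →ₐ[k] MvPolynomial (Fin r) k) :=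
    algebraicIndependent_iff_injective_aeval.mp hind
  set D := Finset.univ.sup (fun i => (P i).totalDegree) with hD
  set t := (n * D + 1) ^ r with ht
  set m := n * t * D with hm
  -- the index map into finitely supported functions
  let v2f : (Fin n → Fin (t + 1)) → (Fin n →₀ ℕ) :=
    fun v => Finsupp.equivFunOnFinite.symm (fun i => (v i : ℕ))
  have hv2f : Function.Injective v2f := by
    intro a b hab
    funext i
    have := congrArg (fun f : Fin n →₀ ℕ => f i) hab
    simpa [v2f, Fin.val_injective.eq_iff] using Fin.val_injective this
  -- the linearly independent family of monomials
  have he : LinearIndependent k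
      (fun v : Fin n → Fin (t + 1) => (monomial (v2f v) (1 : k))) := by
    have := (basisMonomials (Fin n) k).linearIndependent.comp v2f hv2f
    rwa [coe_basisMonomials] at this
  have hli : LinearIndependent k
      (fun v : Fin n → Fin (t + 1) => aeval P (monomial (v2f v) (1 : k))) :=
    he.map' (aeval P).toLinearMap (LinearMap.ker_eq_bot.mpr hinj)
  -- each image lies in the space of polynomials of total degree ≤ m
  have hmem : ∀ v : Fin n → Fin (t + 1),
      aeval P (monomial (v2f v) (1 : k)) ∈ restrictTotalDegree (Fin r) k m := by
    intro v
    rw [mem_restrictTotalDegree]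
    have heq : aeval P (monomial (v2f v) (1 : k)) = ∏ i, P i ^ (v i : ℕ) := by
      rw [aeval_monomial, Finsupp.prod_pow]
      simp [v2f]
    rw [heq]
    calc (∏ i, P i ^ (v i : ℕ)).totalDegree
        ≤ ∑ i, (P i ^ (v i : ℕ)).totalDegree := totalDegree_finset_prod _ _
      _ ≤ ∑ i : Fin n, t * D := by
          refine Finset.sum_le_sum fun i _ => ?_
          refine (totalDegree_pow _ _).trans ?_
          exact Nat.mul_le_mul (Nat.lt_succ_iff.mp (v i).isLt)
            (Finset.le_sup (f := fun i => (P i).totalDegree) (Finset.mem_univ i))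
      _ = m := by simp [hm]; ring
  -- restrict to the submodule
  let g : (Fin n → Fin (t + 1)) → restrictTotalDegree (Fin r) k m :=
    fun v => ⟨aeval P (monomial (v2f v) (1 : k)), hmem v⟩
  have hg : LinearIndependent k g := by
    apply LinearIndependent.of_comp (restrictTotalDegree (Fin r) k m).subtype
    exact hli
  have hcard1 : Fintype.card (Fin n → Fin (t + 1)) ≤
      Module.finrank k (restrictTotalDegree (Fin r) k m) :=
    hg.fintype_card_le_finrank
  -- bound the finrank
  set S : Set (Fin r →₀ ℕ) := { s | (s.sum fun _ e => e) ≤ m } with hS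
  let j : S → (Fin r → Fin (m + 1)) := fun β i =>
    ⟨β.1 i, by
      have hle : β.1 i ≤ β.1.sum fun _ e => e := by
        by_cases hi : i ∈ β.1.support
        · exact Finset.single_le_sum (fun a _ => Nat.zero_le _) hi
        · simp [Finsupp.notMem_support_iff.mp hi]
      exact Nat.lt_succ_of_le (hle.trans β.2)⟩
  have hjinj : Function.Injective j := by
    intro a b hab
    apply Subtype.ext
    ext i
    exact congrArg Fin.val (congrFun hab i)
  haveI : Finite S := Finite.of_injective j hjinj
  haveI : Fintype S := Fintype.ofFinite _
  have hfr : Module.finrank k (restrictTotalDegree (Fin r) k m) = Fintype.card S :=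
    Module.finrank_eq_card_basis (basisRestrictSupport k S)
  have hcard2 : Fintype.card S ≤ (m + 1) ^ r := by
    have := Fintype.card_le_of_injective j hjinj
    simpa using this
  have hbig : (t + 1) ^ n ≤ (m + 1) ^ r := by
    have := hcard1.trans (hfr.le.trans hcard2)
    simpa using this
  exact absurd hbig (not_le.mpr (key_ineq r n D hrn))

/-- Let k be a field and r < n. A map φ : k^r → k^n each of whose coordinate functions
is given by a polynomial in r variables over k is not surjective. -/
theorem polynomial_map_not_surjective
    {k : Type*} [Field k] (r n : ℕ) (hrn : r < n)
    (φ : (Fin r → k) → (Fin n → k))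
    (P : Fin n → MvPolynomial (Fin r) k)
    (hφ : ∀ (x : Fin r → k) (i : Fin n), φ x i = MvPolynomial.eval x (P i)) :
    ¬ Function.Surjective φ := by
  intro hs
  cases finite_or_infinite k with
  | inl hfin =>
    haveI := Fintype.ofFinite k
    have h1 : Fintype.card (Fin n → k) ≤ Fintype.card (Fin r → k) :=
      Fintype.card_le_of_surjective φ hs
    rw [Fintype.card_fun, Fintype.card_fun, Fintype.card_fin, Fintype.card_fin] at h1
    exact absurd h1 (not_le.mpr (Nat.pow_lt_pow_right Fintype.one_lt_card hrn))
  | inr hinf =>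
    have hdep := not_algebraicIndependent r n hrn P
    rw [algebraicIndependent_iff] at hdep
    push_neg at hdep
    obtain ⟨F, hF0, hFne⟩ := hdep
    apply hFne
    apply MvPolynomial.funext
    intro y
    obtain ⟨x, hx⟩ := hs y
    have hcomp : MvPolynomial.eval y F = 0 := by
      rw [← hx]
      have h1 : MvPolynomial.eval (φ x) F
          = MvPolynomial.eval x (MvPolynomial.aeval P F) := by
        have hfx : φ x = fun i => MvPolynomial.eval x (P i) := funext (hφ x)
        rw [hfx]
        exact (MvPolynomial.eval₂Hom_bind₁ (RingHom.id k) x P F).symm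
      rw [h1, hF0, map_zero]
    simp [hcomp]
end
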